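/- arXiv:2005.11949 — 5 statements merged into one kernel-verified Lean document; each statement's English description precedes it below -/
import Mathlib

section
/- Given j ∈ ℕ and 0 < δ < 2^{-j}. For any positive integer r ≤ j, there exists a ReLU network φ_r: ℝ → ℝ^{r+1} with width 2^{r+1}+1 and depth 3 such that for every x ∈ Q(j,δ,1) with binary digits x_1, x_2, … one has φ_r(x) = (x_1, …, x_r, Σ_{i≥r+1} 2^{r−i} x_i), i.e. the first r bits of x together with the fractional remainder Bin 0.x_{r+1}x_{r+2}⋯. -/
open scoped BigOperators ENNReal

noncomputable section

/-- `f` is an affine map `x ↦ A x + b`. -/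
def IsAffineMap (din dout : ℕ) (f : (Fin din → ℝ) → (Fin dout → ℝ)) : Prop :=
  ∃ (A : Matrix (Fin dout) (Fin din) ℝ) (b : Fin dout → ℝ),
    ∀ x i, f x i = (∑ j, A i j * x j) + b i

/-- `ReluNetExact din dout f N L` asserts that `f = T_L ∘ σ ∘ ⋯ ∘ σ ∘ T_1` where each `T_l`
is affine, `σ` is the coordinatewise ReLU `t ↦ max t 0`, all intermediate dimensions are at
most `N` (the width), and there are `L` affine layers (the depth). -/
inductive ReluNetExact : (din dout : ℕ) → ((Fin din → ℝ) → (Fin dout → ℝ)) → ℕ → ℕ → Prop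
  | affine {din dout N : ℕ} {f : (Fin din → ℝ) → (Fin dout → ℝ)}
      (hf : IsAffineMap din dout f) : ReluNetExact din dout f N 1
  | comp {din k dout N L : ℕ} (hk : k ≤ N) {T : (Fin din → ℝ) → (Fin k → ℝ)}
      (hT : IsAffineMap din k T) {g : (Fin k → ℝ) → (Fin dout → ℝ)}
      (hg : ReluNetExact k dout g N L) :
      ReluNetExact din dout (fun x => g (fun i => max (T x i) 0)) N (L + 1)

/-- `f` is representable by a ReLU network with width at most `N` and depth at most `L`. -/
def IsReluNet (din dout : ℕ) (f : (Fin din → ℝ) → (Fin dout → ℝ)) (N L : ℕ) : Prop :=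
  ∃ L' ≤ L, ReluNetExact din dout f N L'

/-- Scalar-valued version of `IsReluNet`. -/
def IsReluNet1 (din : ℕ) (f : (Fin din → ℝ) → ℝ) (N L : ℕ) : Prop :=
  IsReluNet din 1 (fun x _ => f x) N L

/-- The set `Q(j,δ,1) = [0,1) \ ∪_{k=1}^{2^j-1} (k 2^{-j} - δ, k 2^{-j})`. -/
def Q1 (j : ℕ) (δ : ℝ) : Set ℝ :=
  Set.Ico (0:ℝ) 1 \ ⋃ k ∈ Finset.Icc (1 : ℕ) (2 ^ j - 1), Set.Ioo ((k : ℝ) / 2 ^ j - δ) ((k : ℝ) / 2 ^ j)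

/-- The set `Q(j,δ,d)`: every coordinate lies in `Q(j,δ,1)`. -/
def Qd (j d : ℕ) (δ : ℝ) : Set (Fin d → ℝ) := {x | ∀ i, x i ∈ Q1 j δ}

/-- The `i`-th binary digit (`i ≥ 1`) of `x ∈ [0,1)`: `x_i = ⌊2^i x⌋ mod 2`. -/
noncomputable def bdigit (i : ℕ) (x : ℝ) : ℝ := ((⌊(2:ℝ) ^ i * x⌋ % 2 : ℤ) : ℝ)

/-!
With `n = ⌊2^r x⌋₊`, the first `r` bits of `x` are the binary digits of `n` and the remainder
is `2^r x - n`; both are functions of `n` plus a linear term in `x`. For a threshold `c`, the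
difference of ReLUs `σ((x - c)/δ + 1) - σ((x - c)/δ)` equals `1` for `x ≥ c` and `0` for
`x ≤ c - δ`, and `Q(j,δ,1)` contains no point of `(c - δ, c)` when `c = k/2^r`, `0 < k < 2^r`,
`r ≤ j`. So on `Q(j,δ,1)` these ramps at the `2^r - 1` thresholds `k/2^r` are exactly the
indicators `[k ≤ n]`, and any `g(n)` is the telescoping sum
`g 0 + ∑_{1 ≤ k ≤ n} (g k - g (k-1))`, a linear combination of them. Together with an identity
unit for the linear term this uses `1 + 2 (2^r - 1)` hidden units.
-/

namespace BitExtraction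

open Finset

theorem isReluNet_of_one_hidden_layer {ι : Type*} [Fintype ι] {din dout N L : ℕ}
    (hι : Fintype.card ι ≤ N) (hL : 2 ≤ L) (W : ι → Fin din → ℝ) (b : ι → ℝ)
    (A : Fin dout → ι → ℝ) (c : Fin dout → ℝ) :
    IsReluNet din dout (fun x i => ∑ t, A i t * max (∑ l, W t l * x l + b t) 0 + c i) N L := by
  let e := Fintype.equivFin ι
  refine ⟨2, hL, ?_⟩
  have hT : IsAffineMap din (Fintype.card ι)
      fun x t => ∑ l, W (e.symm t) l * x l + b (e.symm t) :=
    ⟨fun t l => W (e.symm t) l, fun t => b (e.symm t), fun _ _ => rfl⟩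
  have hg : IsAffineMap (Fintype.card ι) dout fun y i => ∑ t, A i (e.symm t) * y t + c i :=
    ⟨fun i t => A i (e.symm t), c, fun _ _ => rfl⟩
  convert ReluNetExact.comp hι hT (ReluNetExact.affine hg) using 3 with x i
  rw [← e.symm.sum_comp]

def ramp (δ c x : ℝ) : ℝ := max ((x - c) / δ + 1) 0 - max ((x - c) / δ) 0

theorem ramp_eq_ite {δ c x : ℝ} (hδ : 0 < δ) (hx : x ∉ Set.Ioo (c - δ) c) :
    ramp δ c x = if c ≤ x then 1 else 0 := by
  unfold ramp
  split_ifs with hcx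
  · have : 0 ≤ (x - c) / δ := div_nonneg (by linarith) hδ.le
    rw [max_eq_left (by linarith), max_eq_left this]
    ring
  · have hxc : x ≤ c - δ := by
      by_contra h
      exact hx ⟨by linarith, by linarith⟩
    have : (x - c) / δ ≤ -1 := by rw [div_le_iff₀ hδ]; linarith
    rw [max_eq_right (by linarith), max_eq_right (by linarith)]
    ring

theorem notMem_Ioo_of_mem_Q1 {j r k : ℕ} {δ x : ℝ} (hx : x ∈ Q1 j δ) (hrj : r ≤ j)
    (hk0 : 1 ≤ k) (hk : k < 2 ^ r) :
    x ∉ Set.Ioo ((k : ℝ) / 2 ^ r - δ) ((k : ℝ) / 2 ^ r) := by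
  have hsplit : 2 ^ j = 2 ^ r * 2 ^ (j - r) := by rw [← pow_add, Nat.add_sub_cancel' hrj]
  have hscale : (k : ℝ) / 2 ^ r = ((k * 2 ^ (j - r) : ℕ) : ℝ) / 2 ^ j := by
    rw [show (2 : ℝ) ^ j = 2 ^ r * 2 ^ (j - r) by exact_mod_cast hsplit]
    push_cast
    field_simp
  have hmem : k * 2 ^ (j - r) ∈ Icc 1 (2 ^ j - 1) := by
    have h1 : 1 ≤ 2 ^ (j - r) := Nat.one_le_two_pow
    have h2 : k * 2 ^ (j - r) < 2 ^ j := hsplit ▸ Nat.mul_lt_mul_of_pos_right hk h1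
    exact mem_Icc.2 ⟨Nat.one_le_iff_ne_zero.2 (by positivity), by omega⟩
  rw [hscale]
  exact fun hIoo => hx.2 (Set.mem_iUnion₂.2 ⟨_, hmem, hIoo⟩)

theorem ramp_dyadic_eq_ite_floor {j r k : ℕ} {δ x : ℝ} (hδ : 0 < δ) (hx : x ∈ Q1 j δ)
    (hrj : r ≤ j) (hk0 : 1 ≤ k) (hk : k < 2 ^ r) :
    ramp δ ((k : ℝ) / 2 ^ r) x = if k ≤ ⌊(2 : ℝ) ^ r * x⌋₊ then 1 else 0 := by
  rw [ramp_eq_ite hδ (notMem_Ioo_of_mem_Q1 hx hrj hk0 hk)]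
  congr 1
  rw [Nat.le_floor_iff (by have := hx.1.1; positivity), div_le_iff₀ (by positivity), mul_comm]

theorem sum_fin_ite_succ_le {M : Type*} [AddCommGroup M] {K n : ℕ} (hn : n ≤ K)
    (g : ℕ → M) :
    ∑ m : Fin K, (if (m : ℕ) + 1 ≤ n then g (m + 1) - g m else 0) = g n - g 0 := by
  rw [Fin.sum_univ_eq_sum_range (fun m => if m + 1 ≤ n then g (m + 1) - g m else 0),
    ← sum_filter, ← sum_range_sub]
  congr 1
  ext m
  simp only [mem_filter, mem_range]
  omega

theorem floor_two_pow_mul_eq_div (x : ℝ) {i r : ℕ} (hi : i ≤ r) :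
    ⌊(2 : ℝ) ^ i * x⌋₊ = ⌊(2 : ℝ) ^ r * x⌋₊ / 2 ^ (r - i) := by
  rw [← Nat.floor_div_natCast, Nat.cast_pow, Nat.cast_ofNat,
    ← Nat.sub_add_cancel hi, pow_add, Nat.add_sub_cancel]
  field_simp

theorem floor_two_pow_mul_lt {x : ℝ} (hx0 : 0 ≤ x) (hx1 : x < 1) (r : ℕ) :
    ⌊(2 : ℝ) ^ r * x⌋₊ < 2 ^ r := by
  rw [Nat.floor_lt (by positivity)]
  push_cast
  nlinarith [pow_pos (two_pos : (0 : ℝ) < 2) r]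

theorem bdigit_eq_floor_mod {x : ℝ} (hx : 0 ≤ x) (i : ℕ) :
    bdigit i x = ((⌊(2 : ℝ) ^ i * x⌋₊ % 2 : ℕ) : ℝ) := by
  rw [bdigit, ← Int.natCast_floor_eq_floor (by positivity)]
  norm_cast

theorem bdigit_eq_floor_div_mod {x : ℝ} (hx : 0 ≤ x) {i r : ℕ} (hi : i ≤ r) :
    bdigit i x = ((⌊(2 : ℝ) ^ r * x⌋₊ / 2 ^ (r - i) % 2 : ℕ) : ℝ) := by
  rw [bdigit_eq_floor_mod hx, floor_two_pow_mul_eq_div x hi]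

theorem bdigit_succ {x : ℝ} (hx : 0 ≤ x) (m : ℕ) :
    bdigit (m + 1) x = ⌊(2 : ℝ) ^ (m + 1) * x⌋₊ - 2 * ⌊(2 : ℝ) ^ m * x⌋₊ := by
  rw [bdigit_eq_floor_mod hx, floor_two_pow_mul_eq_div x (Nat.le_add_right m 1),
    Nat.add_sub_cancel_left, pow_one]
  have := Nat.mod_add_div ⌊(2 : ℝ) ^ (m + 1) * x⌋₊ 2
  rw [eq_sub_iff_add_eq]
  exact_mod_cast this

theorem sum_two_pow_mul_bdigit {x : ℝ} (hx0 : 0 ≤ x) (hx1 : x < 1) (r : ℕ) :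
    ∑ i ∈ Icc 1 r, (2 : ℝ) ^ (r - i) * bdigit i x = ⌊(2 : ℝ) ^ r * x⌋₊ := by
  induction r with
  | zero => simp [Nat.floor_eq_zero.2 hx1]
  | succ r ih =>
    have hdouble : ∀ i ∈ Icc 1 r, (2 : ℝ) ^ (r + 1 - i) * bdigit i x
        = 2 * ((2 : ℝ) ^ (r - i) * bdigit i x) := by
      intro i hi
      rw [Nat.sub_add_comm (mem_Icc.1 hi).2, pow_succ]
      ring
    rw [sum_Icc_succ_top (by omega), sum_congr rfl hdouble, ← mul_sum, ih, Nat.sub_self,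
      pow_zero, one_mul, bdigit_succ hx0]
    ring

def readout (r : ℕ) (i : Fin (r + 1)) (n : ℕ) : ℝ :=
  if (i : ℕ) < r then ((n / 2 ^ (r - (i + 1)) % 2 : ℕ) : ℝ) else -n

def bitNet (r : ℕ) (δ : ℝ) (x : Fin 1 → ℝ) (i : Fin (r + 1)) : ℝ :=
  (if (i : ℕ) < r then 0 else 2 ^ r) * max (x 0) 0 +
    ∑ m : Fin (2 ^ r - 1),
      (readout r i (m + 1) - readout r i m) * ramp δ (((m + 1 : ℕ) : ℝ) / 2 ^ r) (x 0)

theorem isReluNet_bitNet (r : ℕ) (δ : ℝ) :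
    IsReluNet 1 (r + 1) (bitNet r δ) (2 ^ (r + 1) + 1) 3 := by
  have hcard : Fintype.card (Unit ⊕ Fin (2 ^ r - 1) × Bool) ≤ 2 ^ (r + 1) + 1 := by
    simp only [Fintype.card_sum, Fintype.card_unit, Fintype.card_prod, Fintype.card_fin,
      Fintype.card_bool, pow_succ]
    omega
  -- hidden unit `inl ()` is `σ(x)`, and `inr (m, b)` is `σ((x - (m+1)/2^r)/δ + [b])`
  convert isReluNet_of_one_hidden_layer hcard (Nat.le_succ 2)
    (fun t _ => Sum.elim (fun _ => 1) (fun _ => δ⁻¹) t)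
    (Sum.elim (fun _ => 0) fun p => -(((p.1 + 1 : ℕ) : ℝ) / 2 ^ r) / δ + if p.2 then 1 else 0)
    (fun i => Sum.elim (fun _ => if (i : ℕ) < r then 0 else 2 ^ r)
      fun p => (if p.2 then 1 else -1) * (readout r i (p.1 + 1) - readout r i p.1))
    0 using 1
  funext x i
  simp only [bitNet, ramp, Fin.default_eq_zero, Fintype.sum_sum_type, Fintype.sum_prod_type,
    Fintype.sum_bool, univ_unique, sum_singleton, Sum.elim_inl, Sum.elim_inr, Pi.zero_apply,
    add_zero, one_mul, if_true, Bool.false_eq_true, if_false]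
  congr 1
  exact sum_congr rfl fun m _ => by ring_nf

theorem bitNet_apply {j r : ℕ} {δ x : ℝ} (hδ : 0 < δ) (hrj : r ≤ j) (hx : x ∈ Q1 j δ)
    (i : Fin (r + 1)) :
    bitNet r δ (fun _ => x) i =
      (if (i : ℕ) < r then 0 else 2 ^ r * x) + readout r i ⌊(2 : ℝ) ^ r * x⌋₊ := by
  have hfloor := floor_two_pow_mul_lt hx.1.1 hx.1.2 r
  have hsteps : ∀ m : Fin (2 ^ r - 1), ramp δ (((m + 1 : ℕ) : ℝ) / 2 ^ r) x
      = if (m : ℕ) + 1 ≤ ⌊(2 : ℝ) ^ r * x⌋₊ then 1 else 0 :=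
    fun m => ramp_dyadic_eq_ite_floor hδ hx hrj (Nat.le_add_left 1 m) (by omega)
  simp only [bitNet, hsteps, mul_ite, mul_one, mul_zero, max_eq_left hx.1.1]
  rw [sum_fin_ite_succ_le (by omega)]
  split_ifs <;> simp [readout]

end BitExtraction

theorem stmt5_general (j : ℕ) (δ : ℝ) (hδ0 : 0 < δ)
    (r : ℕ) (hrj : r ≤ j) :
    ∃ φr : (Fin 1 → ℝ) → (Fin (r + 1) → ℝ),
      IsReluNet 1 (r + 1) φr (2 ^ (r + 1) + 1) 3 ∧
      ∀ x ∈ Q1 j δ,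
        (∀ i : Fin r, φr (fun _ => x) i.castSucc = bdigit ((i : ℕ) + 1) x) ∧
        φr (fun _ => x) (Fin.last r) =
          (2:ℝ) ^ r * x - ∑ i ∈ Finset.Icc 1 r, (2:ℝ) ^ (r - i) * bdigit i x := by
  refine ⟨BitExtraction.bitNet r δ, BitExtraction.isReluNet_bitNet r δ,
    fun x hx => ⟨fun i => ?_, ?_⟩⟩
  · rw [BitExtraction.bitNet_apply hδ0 hrj hx,
      BitExtraction.bdigit_eq_floor_div_mod hx.1.1 i.isLt]
    simp [BitExtraction.readout]
  · rw [BitExtraction.bitNet_apply hδ0 hrj hx, BitExtraction.sum_two_pow_mul_bdigit hx.1.1 hx.1.2]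
    simp [BitExtraction.readout, sub_eq_add_neg]

/-- Lemma `bit extraction`. -/
theorem stmt5 (j : ℕ) (hj : 0 < j) (δ : ℝ) (hδ0 : 0 < δ) (hδ : δ < ((2:ℝ) ^ j)⁻¹)
    (r : ℕ) (hr0 : 0 < r) (hrj : r ≤ j) :
    ∃ φr : (Fin 1 → ℝ) → (Fin (r + 1) → ℝ),
      IsReluNet 1 (r + 1) φr (2 ^ (r + 1) + 1) 3 ∧
      ∀ x ∈ Q1 j δ,
        (∀ i : Fin r, φr (fun _ => x) i.castSucc = bdigit ((i : ℕ) + 1) x) ∧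
        φr (fun _ => x) (Fin.last r) =
          (2:ℝ) ^ r * x - ∑ i ∈ Finset.Icc 1 r, (2:ℝ) ^ (r - i) * bdigit i x :=
  stmt5_general j δ hδ0 r hrj
end
end

section
/- Given r, j ∈ ℕ and 0 < δ < 2^{-j}. For any integer 0 ≤ k ≤ j, there exists a ReLU network φ: ℝ → ℝ³ with width 2^{r+1}+3 and depth 2⌈j/r⌉+1 such that for every x ∈ Q(j,δ,1) with binary digits x_1, x_2, … one has φ(x) = ( Σ_{i=1}^k 2^{j−i} x_i, Σ_{i=k+1}^j 2^{j−i} x_i, Σ_{i≥j+1} 2^{j−i} x_i ). -/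
open scoped BigOperators ENNReal

noncomputable section

/-!
A layer that reads `m ≤ r` further binary digits acts on `y = fract (2 ^ b x)`. For
`1 ≤ q < 2 ^ m` the difference `relu (y + δ - q / 2 ^ m) - relu (y - q / 2 ^ m)` equals `δ` if
`q / 2 ^ m ≤ y` and `0` otherwise, because `x ∈ Q(j,δ,1)` keeps `y` out of the gaps
`(q / 2 ^ m - δ, q / 2 ^ m)`. Summed over all `q` these steps give `δ ⌊2 ^ m y⌋`, the next `m`
digits read as an integer; summed over the `q` divisible by `2 ^ p` they give
`δ (⌊2 ^ m y⌋ / 2 ^ p)`, its leading `m - p` digits, which are the new digits before position `k`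
for the right `p`. Three more units carry the two partial sums and `y` through the ReLU (all are
nonnegative), so the next affine map can update them, the remainder becoming
`fract (2 ^ (b + m) x) = 2 ^ m y - ⌊2 ^ m y⌋`. After `⌈j / r⌉` such layers all `j` digits are read.
-/

open Finset

def IsAffineFunctional (d : ℕ) (g : (Fin d → ℝ) → ℝ) : Prop :=
  ∃ (a : Fin d → ℝ) (c : ℝ), ∀ x, g x = (∑ i, a i * x i) + c

namespace IsAffineFunctional

variable {d : ℕ} {f g : (Fin d → ℝ) → ℝ}

theorem const (c : ℝ) : IsAffineFunctional d (fun _ => c) :=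
  ⟨0, c, fun x => by simp⟩

theorem apply (i : Fin d) : IsAffineFunctional d (fun x => x i) :=
  ⟨Pi.single i 1, 0, fun x => by simp [Pi.single_apply]⟩

theorem add (hf : IsAffineFunctional d f) (hg : IsAffineFunctional d g) :
    IsAffineFunctional d (fun x => f x + g x) := by
  obtain ⟨a, c, hf⟩ := hf
  obtain ⟨a', c', hg⟩ := hg
  exact ⟨a + a', c + c', fun x => by
    simp only [hf, hg, Pi.add_apply, add_mul, sum_add_distrib]
    ring⟩

theorem const_mul (c : ℝ) (hf : IsAffineFunctional d f) :
    IsAffineFunctional d (fun x => c * f x) := by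
  obtain ⟨a, b, hf⟩ := hf
  exact ⟨c • a, c * b, fun x => by simp [hf, mul_sum, mul_add, mul_assoc]⟩

theorem sub (hf : IsAffineFunctional d f) (hg : IsAffineFunctional d g) :
    IsAffineFunctional d (fun x => f x - g x) := by
  simpa [sub_eq_add_neg] using hf.add (hg.const_mul (-1))

theorem sum {ι : Type*} (s : Finset ι) {f : ι → (Fin d → ℝ) → ℝ}
    (hf : ∀ i ∈ s, IsAffineFunctional d (f i)) :
    IsAffineFunctional d (fun x => ∑ i ∈ s, f i x) := by
  classical
  induction s using Finset.induction_on with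
  | empty => simpa using const 0
  | insert a s ha ih =>
    simpa [sum_insert ha] using
      (hf a (mem_insert_self a s)).add (ih fun i hi => hf i (mem_insert_of_mem hi))

end IsAffineFunctional

theorem isAffineMap_iff {din dout : ℕ} {f : (Fin din → ℝ) → (Fin dout → ℝ)} :
    IsAffineMap din dout f ↔ ∀ i, IsAffineFunctional din (fun x => f x i) := by
  constructor
  · rintro ⟨A, b, hf⟩ i
    exact ⟨A i, b i, fun x => hf x i⟩
  · intro h
    choose a c hac using h
    exact ⟨Matrix.of a, c, fun x i => hac i x⟩

theorem IsAffineFunctional.comp {a b : ℕ} {f : (Fin a → ℝ) → (Fin b → ℝ)}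
    {g : (Fin b → ℝ) → ℝ} (hg : IsAffineFunctional b g) (hf : IsAffineMap a b f) :
    IsAffineFunctional a (fun x => g (f x)) := by
  obtain ⟨w, c, hg⟩ := hg
  simp only [hg]
  exact (IsAffineFunctional.sum _ fun i _ =>
    ((isAffineMap_iff.mp hf) i).const_mul (w i)).add (IsAffineFunctional.const c)

theorem IsAffineMap.comp {a b c : ℕ} {f : (Fin a → ℝ) → (Fin b → ℝ)}
    {g : (Fin b → ℝ) → (Fin c → ℝ)} (hg : IsAffineMap b c g) (hf : IsAffineMap a b f) :
    IsAffineMap a c (fun x => g (f x)) :=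
  isAffineMap_iff.mpr fun i => ((isAffineMap_iff.mp hg) i).comp hf

theorem ReluNetExact.snoc {a b c d N L : ℕ} {f : (Fin a → ℝ) → (Fin b → ℝ)}
    {T : (Fin b → ℝ) → (Fin d → ℝ)} {G : (Fin d → ℝ) → (Fin c → ℝ)}
    (hf : ReluNetExact a b f N L) (hd : d ≤ N) (hT : IsAffineMap b d T)
    (hG : IsAffineMap d c G) :
    ReluNetExact a c (fun x => G (fun i => max (T (f x) i) 0)) N (L + 1) := by
  induction hf with
  | affine hf => exact .comp hd (hT.comp hf) (.affine hG)
  | comp hk hT' _ ih => exact .comp hk hT' (ih hd hT)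

section FloorRing

variable {R : Type*} [Ring R] [LinearOrder R] [IsOrderedRing R] [FloorRing R]

theorem Int.floor_intCast_mul (z : ℤ) (r : R) :
    ⌊(z : R) * r⌋ = z * ⌊r⌋ + ⌊(z : R) * Int.fract r⌋ := by
  rw [← Int.floor_intCast_add]
  congr 1
  push_cast
  rw [Int.fract, mul_sub, add_sub_cancel]

theorem Int.fract_intCast_mul (z : ℤ) (r : R) :
    Int.fract ((z : R) * r) = Int.fract ((z : R) * Int.fract r) := by
  rw [← Int.fract_intCast_add (z * ⌊r⌋) ((z : R) * Int.fract r)]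
  congr 1
  push_cast
  rw [Int.fract, mul_sub, add_sub_cancel]

end FloorRing

theorem bdigit_succ (i : ℕ) (x : ℝ) :
    bdigit (i + 1) x = ⌊(2:ℝ) ^ (i + 1) * x⌋ - 2 * ⌊(2:ℝ) ^ i * x⌋ := by
  have h : ⌊(2:ℝ) ^ (i + 1) * x⌋ / 2 = ⌊(2:ℝ) ^ i * x⌋ := by
    have := Int.floor_div_natCast ((2:ℝ) ^ (i + 1) * x) 2
    push_cast at this
    rw [← this, pow_succ]
    ring_nf
  rw [bdigit, Int.emod_def, h]
  push_cast
  ring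

theorem bdigit_nonneg (i : ℕ) (x : ℝ) : 0 ≤ bdigit i x := by
  unfold bdigit
  exact_mod_cast Int.emod_nonneg _ two_ne_zero

/-- `2 ^ j` times `x` truncated after its `b`-th binary digit. -/
def scaledTrunc (j b : ℕ) (x : ℝ) : ℝ := 2 ^ (j - b) * ⌊(2:ℝ) ^ b * x⌋

theorem scaledTrunc_add {j b h : ℕ} (hbh : b + h ≤ j) (x : ℝ) :
    scaledTrunc j (b + h) x =
      scaledTrunc j b x + 2 ^ (j - (b + h)) * ⌊(2:ℝ) ^ h * Int.fract ((2:ℝ) ^ b * x)⌋ := by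
  have hfloor := Int.floor_intCast_mul (2 ^ h) ((2:ℝ) ^ b * x)
  push_cast at hfloor
  have hpow : (2:ℝ) ^ (j - b) = 2 ^ (j - (b + h)) * 2 ^ h := by
    rw [← pow_add]; congr 1; omega
  rw [scaledTrunc, scaledTrunc, pow_add, mul_comm ((2:ℝ) ^ b), mul_assoc, hfloor, hpow]
  push_cast
  ring

theorem sum_Icc_bdigit {j a b : ℕ} (hab : a ≤ b) (hbj : b ≤ j) (x : ℝ) :
    ∑ i ∈ Icc (a + 1) b, (2:ℝ) ^ (j - i) * bdigit i x = scaledTrunc j b x - scaledTrunc j a x := by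
  induction b, hab using Nat.le_induction with
  | base => simp
  | succ b hab ih =>
    have hpow : (2:ℝ) ^ (j - b) = 2 ^ (j - (b + 1)) * 2 := by
      rw [← pow_succ]; congr 1; omega
    rw [sum_Icc_succ_top (by omega), ih (by omega), bdigit_succ, scaledTrunc, scaledTrunc,
      scaledTrunc, hpow]
    ring

theorem scaledTrunc_le_scaledTrunc {j c b : ℕ} (hcb : c ≤ b) (hbj : b ≤ j) (x : ℝ) :
    scaledTrunc j c x ≤ scaledTrunc j b x := by
  rw [← sub_nonneg, ← sum_Icc_bdigit hcb hbj]
  exact sum_nonneg fun i _ => mul_nonneg (by positivity) (bdigit_nonneg i x)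

theorem scaledTrunc_nonneg (j b : ℕ) {x : ℝ} (hx : 0 ≤ x) : 0 ≤ scaledTrunc j b x :=
  mul_nonneg (by positivity) (by exact_mod_cast Int.floor_nonneg.mpr (by positivity))

theorem scaledTrunc_zero_right (j : ℕ) {x : ℝ} (hx : x ∈ Set.Ico 0 1) : scaledTrunc j 0 x = 0 := by
  simp [scaledTrunc, Int.floor_eq_zero_iff.mpr hx]

theorem floor_two_pow_mul_lt {y : ℝ} (hy : y ∈ Set.Ico 0 1) (m : ℕ) : ⌊(2:ℝ) ^ m * y⌋₊ < 2 ^ m := by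
  have : (2:ℝ) ^ m * y < 2 ^ m := mul_lt_of_lt_one_right (by positivity) hy.2
  exact (Nat.floor_lt (mul_nonneg (by positivity) hy.1)).mpr (by exact_mod_cast this)

theorem floor_two_pow_mul_eq_div (h p : ℕ) (y : ℝ) :
    ⌊(2:ℝ) ^ h * y⌋₊ = ⌊(2:ℝ) ^ (h + p) * y⌋₊ / 2 ^ p := by
  rw [← Nat.floor_div_natCast]
  congr 1
  push_cast
  rw [pow_add]
  field_simp

theorem scaledTrunc_min_add {j k b m : ℕ} (hbm : b + m ≤ j) (x : ℝ) :
    scaledTrunc j (min k (b + m)) x = scaledTrunc j (min k b) x + 2 ^ (j - min k (b + m)) *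
      (⌊(2:ℝ) ^ m * Int.fract ((2:ℝ) ^ b * x)⌋₊ / 2 ^ (m - (min k (b + m) - b)) : ℕ) := by
  have hy : Int.fract ((2:ℝ) ^ b * x) ∈ Set.Ico 0 1 := ⟨Int.fract_nonneg _, Int.fract_lt_one _⟩
  rcases le_or_gt k b with hkb | hbk
  · rw [min_eq_left hkb, min_eq_left (by omega), Nat.sub_eq_zero_of_le hkb, Nat.sub_zero,
      Nat.div_eq_of_lt (floor_two_pow_mul_lt hy m)]
    simp
  · set h := min k (b + m) - b
    have hc : min k (b + m) = b + h := by omega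
    rw [min_eq_right hbk.le, hc, scaledTrunc_add (by omega),
      ← natCast_floor_eq_intCast_floor (mul_nonneg (by positivity) hy.1),
      floor_two_pow_mul_eq_div h (m - h),
      Nat.add_sub_cancel' (show h ≤ m by omega)]

theorem fract_two_pow_mul_notMem_Ioo {j b m q : ℕ} {δ x : ℝ} (hδ : 0 ≤ δ) (hx : x ∈ Q1 j δ)
    (hbm : b + m ≤ j) (hq : q ∈ Icc 1 (2 ^ m - 1)) :
    Int.fract ((2:ℝ) ^ b * x) ∉ Set.Ioo ((q:ℝ) / 2 ^ m - δ) ((q:ℝ) / 2 ^ m) := by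
  obtain ⟨⟨hx0, hx1⟩, hxQ⟩ := hx
  rintro ⟨hlo, hhi⟩
  rw [mem_Icc] at hq
  set n := ⌊(2:ℝ) ^ b * x⌋₊
  have hfract : Int.fract ((2:ℝ) ^ b * x) = 2 ^ b * x - n := by
    rw [Int.fract, ← natCast_floor_eq_intCast_floor (by positivity)]
  have hn : (n:ℝ) + 1 ≤ 2 ^ b := by
    have : n + 1 ≤ 2 ^ b := floor_two_pow_mul_lt ⟨hx0, hx1⟩ b
    exact_mod_cast this
  have hq' : (q:ℝ) < 2 ^ m := by
    have : q < 2 ^ m := by have := Nat.one_le_two_pow (n := m); omega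
    exact_mod_cast this
  -- `x` lies just below the grid point `K / 2^j = (n + q / 2^m) / 2^b`
  set K := (n * 2 ^ m + q) * 2 ^ (j - (b + m))
  have hK : (K:ℝ) / 2 ^ j = (n + q / 2 ^ m) / 2 ^ b := by
    have hpow : (2:ℝ) ^ j = 2 ^ (j - (b + m)) * 2 ^ b * 2 ^ m := by
      rw [← pow_add, ← pow_add]; congr 1; omega
    rw [hpow]
    simp only [K]
    push_cast
    field_simp
  have hb : (0:ℝ) < 2 ^ b := by positivity
  have hxn : x = (n + Int.fract ((2:ℝ) ^ b * x)) / 2 ^ b := by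
    rw [hfract]; field_simp; ring
  apply hxQ
  simp only [Set.mem_iUnion]
  refine ⟨K, mem_Icc.mpr ⟨Nat.mul_pos (by omega) (by positivity), ?_⟩, ?_, ?_⟩
  · have : (K:ℝ) / 2 ^ j < 1 := by
      rw [hK, div_lt_one hb]
      linarith [div_lt_one (by positivity : (0:ℝ) < 2 ^ m) |>.mpr hq']
    have : K < 2 ^ j := by
      rw [div_lt_one (by positivity)] at this
      exact_mod_cast this
    omega
  · calc (K:ℝ) / 2 ^ j - δ ≤ (K:ℝ) / 2 ^ j - δ / 2 ^ b :=
          sub_le_sub_left (div_le_self hδ (one_le_pow₀ one_le_two)) _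
      _ = (n + (q / 2 ^ m - δ)) / 2 ^ b := by rw [hK]; ring
      _ < x := by rw [hxn]; gcongr
  · rw [hK, hxn]
    gcongr

theorem max_add_sub_max_eq_ite {u δ : ℝ} (hδ : 0 ≤ δ) (hu : u ∉ Set.Ioo (-δ) 0) :
    max (u + δ) 0 - max u 0 = if 0 ≤ u then δ else 0 := by
  split_ifs with h
  · rw [max_eq_left (by linarith), max_eq_left h]
    ring
  · have : u ≤ -δ := by
      by_contra h'
      exact hu ⟨by linarith, by linarith⟩
    rw [max_eq_right (by linarith), max_eq_right (by linarith)]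
    ring

theorem sum_filter_ramp_eq {m : ℕ} (p : ℕ) {δ y : ℝ} (hδ : 0 ≤ δ) (hy : y ∈ Set.Ico 0 1)
    (hsep : ∀ q ∈ Icc (1:ℕ) (2 ^ m - 1), y ∉ Set.Ioo ((q:ℝ) / 2 ^ m - δ) ((q:ℝ) / 2 ^ m)) :
    ∑ q ∈ Icc (1:ℕ) (2 ^ m - 1) with 2 ^ p ∣ q,
        (max (y + δ - (q:ℝ) / 2 ^ m) 0 - max (y - (q:ℝ) / 2 ^ m) 0)
      = δ * (⌊(2:ℝ) ^ m * y⌋₊ / 2 ^ p : ℕ) := by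
  set t := ⌊(2:ℝ) ^ m * y⌋₊
  have ht : t ≤ 2 ^ m - 1 := by have := floor_two_pow_mul_lt hy m; omega
  have hstep : ∀ q ∈ Icc (1:ℕ) (2 ^ m - 1),
      max (y + δ - (q:ℝ) / 2 ^ m) 0 - max (y - (q:ℝ) / 2 ^ m) 0 = if q ≤ t then δ else 0 := by
    intro q hq
    rw [add_sub_right_comm, max_add_sub_max_eq_ite hδ]
    · congr 1
      rw [sub_nonneg, div_le_iff₀ (by positivity),
        Nat.le_floor_iff (mul_nonneg (by positivity) hy.1), mul_comm]
    · rintro ⟨h₁, h₂⟩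
      exact hsep q hq ⟨by linarith, by linarith⟩
  rw [sum_congr rfl fun q hq => hstep q (mem_filter.mp hq).1, ← sum_filter, sum_const,
    nsmul_eq_mul, mul_comm, filter_filter, ← Nat.Ioc_filter_dvd_card_eq_div]
  congr 3
  ext q
  simp only [mem_filter, mem_Icc, mem_Ioc]
  omega

section RampLayer

variable (M m : ℕ) (δ : ℝ)

/-- Units `0, 1, 2` copy `s`; for `1 ≤ q ≤ M`, unit `2 + q` is `s 2 + δ - q / 2 ^ m` and unit
`2 + M + q` is `s 2 - q / 2 ^ m`. -/
def rampLayerIn (s : Fin 3 → ℝ) (i : Fin (3 + 2 * M)) : ℝ :=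
  if h : (i : ℕ) < 3 then s ⟨i, h⟩
  else if (i : ℕ) ≤ 2 + M then s 2 + δ - (((i : ℕ) - 2 : ℕ) : ℝ) / 2 ^ m
  else s 2 - (((i : ℕ) - 2 - M : ℕ) : ℝ) / 2 ^ m

def upperIdx (q : ℕ) : Fin (3 + 2 * M) := ⟨2 + min q M, by omega⟩

def lowerIdx (q : ℕ) : Fin (3 + 2 * M) := ⟨2 + M + min q M, by omega⟩

def rampCount (p : ℕ) (h : Fin (3 + 2 * M) → ℝ) : ℝ :=
  ∑ q ∈ Icc 1 M with 2 ^ p ∣ q, (h (upperIdx M q) - h (lowerIdx M q))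

def rampLayerOut (p e₀ e₁ : ℕ) (h : Fin (3 + 2 * M) → ℝ) : Fin 3 → ℝ :=
  let copy (i : Fin 3) : ℝ := h (Fin.castLE (by omega) i)
  ![copy 0 + 2 ^ e₀ / δ * rampCount M p h,
    copy 1 + 2 ^ e₁ / δ * rampCount M 0 h - 2 ^ e₀ / δ * rampCount M p h,
    2 ^ m * copy 2 - δ⁻¹ * rampCount M 0 h]

def digitUpdate (p e₀ e₁ : ℕ) (s : Fin 3 → ℝ) : Fin 3 → ℝ :=
  let t := ⌊(2:ℝ) ^ m * s 2⌋₊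
  ![s 0 + 2 ^ e₀ * (t / 2 ^ p : ℕ), s 1 + 2 ^ e₁ * t - 2 ^ e₀ * (t / 2 ^ p : ℕ), 2 ^ m * s 2 - t]

theorem isAffineMap_rampLayerIn : IsAffineMap 3 (3 + 2 * M) (rampLayerIn M m δ) := by
  refine isAffineMap_iff.mpr fun i => ?_
  unfold rampLayerIn
  split_ifs
  · exact .apply _
  · exact ((IsAffineFunctional.apply 2).add (.const δ)).sub (.const _)
  · exact (IsAffineFunctional.apply 2).sub (.const _)

theorem isAffineFunctional_rampCount (p : ℕ) : IsAffineFunctional (3 + 2 * M) (rampCount M p) :=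
  .sum _ fun _ _ => (IsAffineFunctional.apply _).sub (.apply _)

theorem isAffineMap_rampLayerOut (p e₀ e₁ : ℕ) :
    IsAffineMap (3 + 2 * M) 3 (rampLayerOut M m δ p e₀ e₁) := by
  refine isAffineMap_iff.mpr fun i => ?_
  have hp := isAffineFunctional_rampCount M p
  have h₀ := isAffineFunctional_rampCount M 0
  fin_cases i
  · exact (IsAffineFunctional.apply _).add (hp.const_mul _)
  · exact ((IsAffineFunctional.apply _).add (h₀.const_mul _)).sub (hp.const_mul _)
  · exact ((IsAffineFunctional.apply _).const_mul _).sub (h₀.const_mul _)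

variable {M m δ} in
theorem rampLayerIn_castLE (s : Fin 3 → ℝ) (i : Fin 3) :
    rampLayerIn M m δ s (Fin.castLE (by omega) i) = s i :=
  dif_pos i.2

variable {M m δ} in
theorem rampLayerIn_upperIdx (s : Fin 3 → ℝ) {q : ℕ} (hq : q ∈ Icc 1 M) :
    rampLayerIn M m δ s (upperIdx M q) = s 2 + δ - (q:ℝ) / 2 ^ m := by
  obtain ⟨hq₁, hqM⟩ := mem_Icc.mp hq
  have hidx : ((upperIdx M q : Fin (3 + 2 * M)) : ℕ) = 2 + q := by simp [upperIdx, hqM]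
  rw [rampLayerIn, hidx, dif_neg (by omega), if_pos (by omega), Nat.add_sub_cancel_left]

variable {M m δ} in
theorem rampLayerIn_lowerIdx (s : Fin 3 → ℝ) {q : ℕ} (hq : q ∈ Icc 1 M) :
    rampLayerIn M m δ s (lowerIdx M q) = s 2 - (q:ℝ) / 2 ^ m := by
  obtain ⟨hq₁, hqM⟩ := mem_Icc.mp hq
  have hidx : ((lowerIdx M q : Fin (3 + 2 * M)) : ℕ) = 2 + M + q := by simp [lowerIdx, hqM]
  rw [rampLayerIn, hidx, dif_neg (by omega), if_neg (by omega), show 2 + M + q - 2 - M = q by omega]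

theorem rampLayerOut_relu_rampLayerIn {p e₀ e₁ : ℕ} (hδ : 0 < δ) {s : Fin 3 → ℝ}
    (hs₀ : 0 ≤ s 0) (hs₁ : 0 ≤ s 1) (hs₂ : s 2 ∈ Set.Ico 0 1)
    (hsep : ∀ q ∈ Icc (1:ℕ) (2 ^ m - 1), s 2 ∉ Set.Ioo ((q:ℝ) / 2 ^ m - δ) ((q:ℝ) / 2 ^ m)) :
    rampLayerOut (2 ^ m - 1) m δ p e₀ e₁ (fun i => max (rampLayerIn (2 ^ m - 1) m δ s i) 0) =
      digitUpdate m p e₀ e₁ s := by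
  have hcount : ∀ p', rampCount (2 ^ m - 1) p' (fun i => max (rampLayerIn (2 ^ m - 1) m δ s i) 0)
      = δ * (⌊(2:ℝ) ^ m * s 2⌋₊ / 2 ^ p' : ℕ) := by
    intro p'
    rw [rampCount, ← sum_filter_ramp_eq p' hδ.le hs₂ hsep]
    refine sum_congr rfl fun q hq => ?_
    have hqM := (mem_filter.mp hq).1
    rw [rampLayerIn_upperIdx s hqM, rampLayerIn_lowerIdx s hqM]
  simp only [rampLayerOut, digitUpdate, hcount, rampLayerIn_castLE]
  ext i
  fin_cases i <;> simp [max_eq_left hs₀, max_eq_left hs₁, max_eq_left hs₂.1] <;> field_simp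

end RampLayer

/-- After reading `b` digits of `x`: the part of `2 ^ j x` formed by its digits `1, …, min k b`,
the part formed by its digits `min k b + 1, …, b`, and the unread rest `fract (2 ^ b x)`. -/
def bitState (j k b : ℕ) (x : ℝ) : Fin 3 → ℝ :=
  ![scaledTrunc j (min k b) x, scaledTrunc j b x - scaledTrunc j (min k b) x,
    Int.fract ((2:ℝ) ^ b * x)]

theorem bitState_add {j k b m : ℕ} (hbm : b + m ≤ j) (x : ℝ) :
    bitState j k (b + m) x = digitUpdate m (m - (min k (b + m) - b)) (j - min k (b + m))
      (j - (b + m)) (bitState j k b x) := by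
  set y := Int.fract ((2:ℝ) ^ b * x)
  have hy : 0 ≤ (2:ℝ) ^ m * y := mul_nonneg (by positivity) (Int.fract_nonneg _)
  have hnew : scaledTrunc j (b + m) x =
      scaledTrunc j b x + 2 ^ (j - (b + m)) * ⌊(2:ℝ) ^ m * y⌋₊ := by
    rw [scaledTrunc_add hbm, natCast_floor_eq_intCast_floor hy]
  have hfract : Int.fract ((2:ℝ) ^ (b + m) * x) = 2 ^ m * y - ⌊(2:ℝ) ^ m * y⌋₊ := by
    have := Int.fract_intCast_mul (2 ^ m) ((2:ℝ) ^ b * x)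
    push_cast at this
    rw [pow_add, mul_comm ((2:ℝ) ^ b), mul_assoc, this, Int.fract,
      natCast_floor_eq_intCast_floor hy]
  ext i
  fin_cases i
  · simp [digitUpdate, bitState, scaledTrunc_min_add hbm]
  · simp [digitUpdate, bitState, scaledTrunc_min_add hbm, hnew, y]
    ring
  · simp [digitUpdate, bitState, hfract, y]

theorem rampLayer_bitState {j k b m : ℕ} {δ x : ℝ} (hδ : 0 < δ) (hx : x ∈ Q1 j δ)
    (hbm : b + m ≤ j) :
    rampLayerOut (2 ^ m - 1) m δ (m - (min k (b + m) - b)) (j - min k (b + m)) (j - (b + m))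
        (fun i => max (rampLayerIn (2 ^ m - 1) m δ (bitState j k b x) i) 0) =
      bitState j k (b + m) x := by
  rw [bitState_add hbm]
  refine rampLayerOut_relu_rampLayerIn m δ hδ ?_ ?_ ?_
    fun q hq => fract_two_pow_mul_notMem_Ioo hδ.le hx hbm hq
  · exact scaledTrunc_nonneg j _ hx.1.1
  · exact sub_nonneg.mpr (scaledTrunc_le_scaledTrunc (min_le_right k b) (by omega) x)
  · exact ⟨Int.fract_nonneg _, Int.fract_lt_one _⟩

theorem bitState_zero (j k : ℕ) {x : ℝ} (hx : x ∈ Set.Ico 0 1) : bitState j k 0 x = ![0, 0, x] := by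
  ext i
  fin_cases i <;> simp [bitState, scaledTrunc_zero_right j hx, Int.fract_eq_self.mpr hx]

theorem bitState_self {j k : ℕ} (hk : k ≤ j) {x : ℝ} (hx : x ∈ Set.Ico 0 1) :
    bitState j k j x =
      ![∑ i ∈ Icc 1 k, (2:ℝ) ^ (j - i) * bdigit i x,
        ∑ i ∈ Icc (k + 1) j, (2:ℝ) ^ (j - i) * bdigit i x,
        (2:ℝ) ^ j * x - ∑ i ∈ Icc 1 j, (2:ℝ) ^ (j - i) * bdigit i x] := by
  rw [sum_Icc_bdigit (Nat.zero_le k) hk, sum_Icc_bdigit hk le_rfl,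
    sum_Icc_bdigit (Nat.zero_le j) le_rfl, scaledTrunc_zero_right j hx]
  ext i
  fin_cases i <;> simp [bitState, min_eq_left hk, scaledTrunc, Int.self_sub_floor]

theorem exists_reluNet_bitState (r j k : ℕ) {δ : ℝ} (hδ : 0 < δ) (t : ℕ) :
    ∃ ψ : (Fin 1 → ℝ) → (Fin 3 → ℝ), ReluNetExact 1 3 ψ (2 ^ (r + 1) + 3) (t + 1) ∧
      ∀ x ∈ Q1 j δ, ψ (fun _ => x) = bitState j k (min (t * r) j) x := by
  induction t with
  | zero =>
    refine ⟨fun v => ![0, 0, v 0], .affine ?_, fun x hx => ?_⟩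
    · refine isAffineMap_iff.mpr fun i => ?_
      fin_cases i
      · exact .const 0
      · exact .const 0
      · exact .apply 0
    · simp [bitState_zero j k hx.1]
  | succ t ih =>
    obtain ⟨ψ, hψ, hψx⟩ := ih
    set b := min (t * r) j
    set m := min ((t + 1) * r) j - b
    have hsucc : (t + 1) * r = t * r + r := by ring
    have hbm : b + m = min ((t + 1) * r) j := by omega
    have hwidth : 3 + 2 * (2 ^ m - 1) ≤ 2 ^ (r + 1) + 3 := by
      have : 2 ^ m ≤ 2 ^ r := Nat.pow_le_pow_right two_pos (by omega)
      rw [pow_succ]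
      omega
    refine ⟨_, hψ.snoc hwidth (isAffineMap_rampLayerIn _ m δ)
      (isAffineMap_rampLayerOut _ m δ (m - (min k (b + m) - b)) (j - min k (b + m)) (j - (b + m))),
      fun x hx => ?_⟩
    simp only [hψx x hx]
    rw [rampLayer_bitState hδ hx (by omega), hbm]

theorem stmt6_general (r j : ℕ) (hr : 0 < r) (δ : ℝ) (hδ0 : 0 < δ)
    (k : ℕ) (hk : k ≤ j) :
    ∃ φ : (Fin 1 → ℝ) → (Fin 3 → ℝ),
      IsReluNet 1 3 φ (2 ^ (r + 1) + 3) (2 * ⌈(j : ℝ) / (r : ℝ)⌉₊ + 1) ∧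
      ∀ x ∈ Q1 j δ,
        φ (fun _ => x) 0 = (∑ i ∈ Finset.Icc 1 k, (2:ℝ) ^ (j - i) * bdigit i x) ∧
        φ (fun _ => x) 1 = (∑ i ∈ Finset.Icc (k + 1) j, (2:ℝ) ^ (j - i) * bdigit i x) ∧
        φ (fun _ => x) 2 =
          (2:ℝ) ^ j * x - ∑ i ∈ Finset.Icc 1 j, (2:ℝ) ^ (j - i) * bdigit i x := by
  set L := ⌈(j : ℝ) / (r : ℝ)⌉₊
  obtain ⟨ψ, hψ, hψx⟩ := exists_reluNet_bitState r j k hδ0 L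
  have hL : j ≤ L * r := by
    have := Nat.le_ceil ((j : ℝ) / r)
    rw [div_le_iff₀ (by positivity)] at this
    exact_mod_cast this
  refine ⟨ψ, ⟨L + 1, by omega, hψ⟩, fun x hx => ?_⟩
  rw [hψx x hx, min_eq_right hL, bitState_self hk hx.1]
  simp

/-- Lemma `bit extraction sum`. -/
theorem stmt6 (r j : ℕ) (hr : 0 < r) (hj : 0 < j) (δ : ℝ) (hδ0 : 0 < δ)
    (hδ : δ < ((2:ℝ) ^ j)⁻¹) (k : ℕ) (hk : k ≤ j) :
    ∃ φ : (Fin 1 → ℝ) → (Fin 3 → ℝ),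
      IsReluNet 1 3 φ (2 ^ (r + 1) + 3) (2 * ⌈(j : ℝ) / (r : ℝ)⌉₊ + 1) ∧
      ∀ x ∈ Q1 j δ,
        φ (fun _ => x) 0 = (∑ i ∈ Finset.Icc 1 k, (2:ℝ) ^ (j - i) * bdigit i x) ∧
        φ (fun _ => x) 1 = (∑ i ∈ Finset.Icc (k + 1) j, (2:ℝ) ^ (j - i) * bdigit i x) ∧
        φ (fun _ => x) 2 =
          (2:ℝ) ^ j * x - ∑ i ∈ Finset.Icc 1 j, (2:ℝ) ^ (j - i) * bdigit i x :=
  stmt6_general r j hr δ hδ0 k hk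
end
end

section
/- Fix a ReLU network architecture with input dimension d_in, output dimension d_out, layer dimensions N_0 = d_in, N_1, …, N_{L-1}, N_L = d_out, and let W = Σ_{l=1}^L (N_l·N_{l-1} + N_l) be the total number of parameters, so that each θ ∈ ℝ^W determines a network function φ_θ: ℝ^{d_in} → ℝ^{d_out}. Suppose M ∈ ℕ is such that for every choice of M samples (x_1,y_1), …, (x_M,y_M) with x_1,…,x_M ∈ ℝ^{d_in} distinct and y_1,…,y_M ∈ ℝ^{d_out} arbitrary, there exists θ ∈ ℝ^W with φ_θ(x_i) = y_i for all i = 1,…,M. Then W ≥ M·d_out. -/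
open scoped BigOperators

noncomputable section

/-- The affine map `x ↦ A x + b`. -/
def affineApply {m n : ℕ} (A : Matrix (Fin m) (Fin n) ℝ) (b : Fin m → ℝ)
    (x : Fin n → ℝ) : Fin m → ℝ :=
  fun i => (∑ j, A i j * x j) + b i

/-- The output of the first `n` hidden layers (each affine layer followed by the
coordinatewise ReLU `t ↦ max t 0`). -/
def hiddenLayers (dims : ℕ → ℕ)
    (A : ∀ l : ℕ, Matrix (Fin (dims (l + 1))) (Fin (dims l)) ℝ)
    (b : ∀ l : ℕ, Fin (dims (l + 1)) → ℝ) :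
    (n : ℕ) → (Fin (dims 0) → ℝ) → (Fin (dims n) → ℝ)
  | 0 => fun x => x
  | n + 1 => fun x i => max (affineApply (A n) (b n) (hiddenLayers dims A b n x) i) 0

/-- The network function `φ_θ = T_{L+1} ∘ σ ∘ T_L ∘ ⋯ ∘ σ ∘ T_1` of a network with
`L + 1` affine layers (depth `L + 1`), layer dimensions `dims 0, …, dims (L+1)` and
parameters `θ = (A, b)`. -/
def realize (dims : ℕ → ℕ) (L : ℕ)
    (A : ∀ l : ℕ, Matrix (Fin (dims (l + 1))) (Fin (dims l)) ℝ)
    (b : ∀ l : ℕ, Fin (dims (l + 1)) → ℝ)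
    (x : Fin (dims 0) → ℝ) : Fin (dims (L + 1)) → ℝ :=
  affineApply (A L) (b L) (hiddenLayers dims A b L x)

/-!
Interpolating arbitrary outputs at `M` fixed distinct inputs makes the map sending the
parameters `θ ∈ ℝ^W` to the outputs `(φ_θ(x_i))_i` surjective onto `ℝ^{M·d_out}`. This map
is locally Lipschitz (affine layers are smooth in weights and inputs, and ReLU is 1-Lipschitz),
and locally Lipschitz maps do not increase Hausdorff dimension, so `M·d_out ≤ W`.
-/

open Set Function Module

attribute [local instance] Matrix.normedAddCommGroup Matrix.normedSpace

theorem LocallyLipschitz.pi {α ι : Type*} [PseudoEMetricSpace α] [Fintype ι]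
    {E : ι → Type*} [∀ i, PseudoEMetricSpace (E i)] {f : α → ∀ i, E i}
    (hf : ∀ i, LocallyLipschitz fun a => f a i) : LocallyLipschitz f := by
  intro a
  choose K t ht hK using fun i => hf i a
  refine ⟨Finset.univ.sup K, ⋂ i, t i, Filter.iInter_mem.2 ht, fun u hu v hv => ?_⟩
  refine edist_pi_le_iff.2 fun i => ?_
  calc edist (f u i) (f v i) ≤ K i * edist u v :=
        hK i (mem_iInter.1 hu i) (mem_iInter.1 hv i)
    _ ≤ Finset.univ.sup K * edist u v := by
        gcongr
        exact_mod_cast Finset.le_sup (Finset.mem_univ i)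

theorem finrank_le_of_locallyLipschitz_of_surjective {E F : Type*} [NormedAddCommGroup E]
    [NormedSpace ℝ E] [FiniteDimensional ℝ E] [NormedAddCommGroup F] [NormedSpace ℝ F]
    [FiniteDimensional ℝ F] {f : E → F} (hf : LocallyLipschitz f) (hsurj : Surjective f) :
    finrank ℝ F ≤ finrank ℝ E := by
  have := dimH_range_le_of_locally_lipschitzOn hf
  rw [hsurj.range_eq, Real.dimH_univ_eq_finrank, Real.dimH_univ_eq_finrank] at this
  exact_mod_cast this

theorem contDiff_affineApply (m n : ℕ) :
    ContDiff ℝ 1 fun p : Matrix (Fin m) (Fin n) ℝ × (Fin m → ℝ) × (Fin n → ℝ) =>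
      affineApply p.1 p.2.1 p.2.2 := by
  unfold affineApply
  fun_prop

theorem LocallyLipschitz.affineApply {α : Type*} [PseudoEMetricSpace α] {m n : ℕ}
    {A : α → Matrix (Fin m) (Fin n) ℝ} {b : α → Fin m → ℝ} {x : α → Fin n → ℝ}
    (hA : LocallyLipschitz A) (hb : LocallyLipschitz b) (hx : LocallyLipschitz x) :
    LocallyLipschitz fun a => affineApply (A a) (b a) (x a) :=
  -- elaborated without the expected type: unifying with it first times out
  ((contDiff_affineApply m n).locallyLipschitz.comp (hA.prodMk (hb.prodMk hx)) :)

theorem LocallyLipschitz.relu {α : Type*} [PseudoEMetricSpace α] {k : ℕ}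
    {v : α → Fin k → ℝ} (hv : LocallyLipschitz v) :
    LocallyLipschitz fun a i => max (v a i) 0 :=
  .pi fun i => ((LipschitzWith.eval i).locallyLipschitz.comp hv).max_const 0

section Network

variable {dims : ℕ → ℕ}

theorem hiddenLayers_congr {A A' : ∀ l : ℕ, Matrix (Fin (dims (l + 1))) (Fin (dims l)) ℝ}
    {b b' : ∀ l : ℕ, Fin (dims (l + 1)) → ℝ} {n : ℕ}
    (h : ∀ l < n, A l = A' l ∧ b l = b' l) :
    hiddenLayers dims A b n = hiddenLayers dims A' b' n := by
  induction n with
  | zero => rfl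
  | succ n ih =>
    obtain ⟨hA, hb⟩ := h n n.lt_succ_self
    rw [hiddenLayers, hiddenLayers, ih fun l hl => h l (hl.trans n.lt_succ_self), hA, hb]

theorem realize_congr {L : ℕ} {A A' : ∀ l : ℕ, Matrix (Fin (dims (l + 1))) (Fin (dims l)) ℝ}
    {b b' : ∀ l : ℕ, Fin (dims (l + 1)) → ℝ} (h : ∀ l ≤ L, A l = A' l ∧ b l = b' l) :
    realize dims L A b = realize dims L A' b' := by
  ext1 x
  obtain ⟨hA, hb⟩ := h L le_rfl
  rw [realize, realize, hiddenLayers_congr fun l hl => h l hl.le, hA, hb]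

variable {α : Type*} [PseudoEMetricSpace α]
  {A : α → ∀ l : ℕ, Matrix (Fin (dims (l + 1))) (Fin (dims l)) ℝ}
  {b : α → ∀ l : ℕ, Fin (dims (l + 1)) → ℝ}

theorem locallyLipschitz_hiddenLayers (hA : ∀ l, LocallyLipschitz fun a => A a l)
    (hb : ∀ l, LocallyLipschitz fun a => b a l) (x : Fin (dims 0) → ℝ) (n : ℕ) :
    LocallyLipschitz fun a => hiddenLayers dims (A a) (b a) n x := by
  induction n with
  | zero => exact .const x
  | succ n ih => exact ((hA n).affineApply (hb n) ih).relu

theorem locallyLipschitz_realize (L : ℕ) (hA : ∀ l, LocallyLipschitz fun a => A a l)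
    (hb : ∀ l, LocallyLipschitz fun a => b a l) (x : Fin (dims 0) → ℝ) :
    LocallyLipschitz fun a => realize dims L (A a) (b a) x :=
  (hA L).affineApply (hb L) (locallyLipschitz_hiddenLayers hA hb x L)

end Network

abbrev NetParams (dims : ℕ → ℕ) (L : ℕ) : Type :=
  ∀ l : Fin (L + 1),
    Matrix (Fin (dims (l + 1))) (Fin (dims l)) ℝ × (Fin (dims (l + 1)) → ℝ)

namespace NetParams

variable {dims : ℕ → ℕ} {L : ℕ}

/-- Layers beyond the last one get zero parameters; `realize` never reads them. -/
def layer (θ : NetParams dims L) (l : ℕ) :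
    Matrix (Fin (dims (l + 1))) (Fin (dims l)) ℝ × (Fin (dims (l + 1)) → ℝ) :=
  if h : l < L + 1 then θ ⟨l, h⟩ else 0

theorem locallyLipschitz_layer (l : ℕ) :
    LocallyLipschitz fun θ : NetParams dims L => θ.layer l := by
  unfold layer
  split_ifs with h
  · exact (LipschitzWith.eval (α := fun l : Fin (L + 1) => _) ⟨l, h⟩).locallyLipschitz
  · exact .const 0

theorem finrank_eq :
    finrank ℝ (NetParams dims L) =
      ∑ l ∈ Finset.range (L + 1), (dims (l + 1) * dims l + dims (l + 1)) := by
  rw [finrank_pi_fintype,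
    ← Fin.sum_univ_eq_sum_range fun l => dims (l + 1) * dims l + dims (l + 1)]
  simp [finrank_prod, finrank_matrix]

end NetParams

/-- Proposition `Hausdorff estimate`: if a fixed architecture can
interpolate every set of `M` samples with distinct inputs, then the number of
parameters `W = Σ_l (N_l N_{l-1} + N_l)` is at least `M · d_out`. -/
theorem stmt8 (L : ℕ) (dims : ℕ → ℕ) (hdin : 0 < dims 0) (M : ℕ)
    (h : ∀ x : Fin M → (Fin (dims 0) → ℝ), Function.Injective x →
      ∀ y : Fin M → (Fin (dims (L + 1)) → ℝ),
        ∃ (A : ∀ l : ℕ, Matrix (Fin (dims (l + 1))) (Fin (dims l)) ℝ)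
          (b : ∀ l : ℕ, Fin (dims (l + 1)) → ℝ),
          ∀ i, realize dims L A b (x i) = y i) :
    M * dims (L + 1) ≤
      ∑ l ∈ Finset.range (L + 1), (dims (l + 1) * dims l + dims (l + 1)) := by
  let x : Fin M → Fin (dims 0) → ℝ := fun i => Pi.single ⟨0, hdin⟩ (i : ℝ)
  have hx : Injective x := (Pi.single_injective _).comp (Nat.cast_injective.comp Fin.val_injective)
  let F : NetParams dims L → Fin M → Fin (dims (L + 1)) → ℝ := fun θ i =>
    realize dims L (fun l => (θ.layer l).1) (fun l => (θ.layer l).2) (x i)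
  have hF : LocallyLipschitz F := .pi fun i => locallyLipschitz_realize L
    (fun l => LipschitzWith.prod_fst.locallyLipschitz.comp (NetParams.locallyLipschitz_layer l))
    (fun l => LipschitzWith.prod_snd.locallyLipschitz.comp (NetParams.locallyLipschitz_layer l))
    (x i)
  have hsurj : Surjective F := by
    intro y
    obtain ⟨A, b, hAb⟩ := h x hx y
    refine ⟨fun l => (A l, b l), funext fun i => .trans ?_ (hAb i)⟩
    rw [realize_congr fun l hl => ?_]
    simp [NetParams.layer, Nat.lt_succ_of_le hl]
  calc M * dims (L + 1) = finrank ℝ (Fin M → Fin (dims (L + 1)) → ℝ) := by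
        simp [finrank_pi_fintype]
    _ ≤ finrank ℝ (NetParams dims L) := finrank_le_of_locallyLipschitz_of_surjective hF hsurj
    _ = _ := NetParams.finrank_eq
end
end

section
/- For any N, L ∈ ℕ and any N²L samples (x_1,y_1), …, (x_{N²L}, y_{N²L}) with x_1, …, x_{N²L} ∈ ℝ^d distinct and y_1, …, y_{N²L} ≥ 0, there exists a ReLU network φ: ℝ^d → ℝ with width 4N+4 and depth L+2 such that φ(x_i) = y_i for all i = 1, …, N²L. -/
open scoped BigOperators ENNReal

noncomputable section

namespace Stmt9Aux

set_option linter.unusedSectionVars false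

/-! ### Generic affine-map machinery over arbitrary finite index types -/

def TAffine {α β : Type} [Fintype α] (f : (α → ℝ) → β → ℝ) : Prop :=
  ∃ (A : β → α → ℝ) (b : β → ℝ), ∀ x i, f x i = (∑ j, A i j * x j) + b i

theorem taffine_of {α β : Type} [Fintype α] {f : (α → ℝ) → β → ℝ}
    (h : ∀ i, ∃ (ρ : α → ℝ) (c : ℝ), ∀ x, f x i = (∑ j, ρ j * x j) + c) : TAffine f := by
  choose ρ c hh using h
  exact ⟨ρ, c, fun x i => hh i x⟩

theorem isAffineMap_reindex {α β : Type} [Fintype α] [Fintype β] {m n : ℕ}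
    (eα : α ≃ Fin m) (eβ : β ≃ Fin n) {f : (α → ℝ) → β → ℝ} (hf : TAffine f) :
    IsAffineMap m n (fun x i => f (fun a => x (eα a)) (eβ.symm i)) := by
  obtain ⟨A, b, h⟩ := hf
  refine ⟨Matrix.of fun i j => A (eβ.symm i) (eα.symm j), fun i => b (eβ.symm i), fun x i => ?_⟩
  show f (fun a => x (eα a)) (eβ.symm i) = _
  rw [h]
  congr 1
  refine Fintype.sum_equiv eα _ _ ?_
  intro a
  simp [Matrix.of_apply]

theorem sum_if_single {α : Type} [Fintype α] [DecidableEq α] (s₀ : α) (c : ℝ) (x : α → ℝ) :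
    (∑ j, (if j = s₀ then c else 0) * x j) = c * x s₀ := by
  simp [ite_mul]

theorem sum_range_split (f : ℕ → ℝ) {q n : ℕ} (h : q ≤ n) :
    ∑ r ∈ Finset.range n, f r = ∑ r ∈ Finset.range q, f r + ∑ r ∈ Finset.Ico q n, f r := by
  simp only [Finset.range_eq_Ico]
  exact (Finset.sum_Ico_consecutive f (Nat.zero_le q) h).symm

theorem fin_sum_shift (f : ℕ → ℝ) (m N : ℕ) :
    ∑ a : Fin N, f (m + (a : ℕ)) = ∑ r ∈ Finset.Ico m (m + N), f r := by
  rw [Finset.sum_Ico_eq_sum_range, Fin.sum_univ_eq_sum_range (fun k => f (m + k)) N]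
  simp

theorem pred_mul_add {r n : ℕ} (hr : 0 < r) : r * n = (r - 1) * n + n := by
  obtain ⟨r', rfl⟩ : ∃ r', r = r' + 1 := ⟨r - 1, by omega⟩
  simp [Nat.succ_mul]

/-- the step indicator `1_{r·N ≤ i}`. -/
def stepf (N r i : ℕ) : ℝ := if r * N ≤ i then 1 else 0

theorem stepf_nonneg (N r i : ℕ) : 0 ≤ stepf N r i := by
  rw [stepf]; split <;> norm_num

theorem runIdx_lt {N L r k : ℕ} (hr : r < L * N) (hk : k < N) : r * N + k < N ^ 2 * L := by
  have h1 : r * N + k < (r + 1) * N := by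
    have h0 : (r + 1) * N = r * N + N := by ring
    omega
  have h2 : (r + 1) * N ≤ (L * N) * N := Nat.mul_le_mul_right N (by omega)
  have h3 : (L * N) * N = N ^ 2 * L := by ring
  omega

theorem div_lt_LN {N L i : ℕ} (hN : 0 < N) (hi : i < N ^ 2 * L) : i / N < L * N := by
  rw [Nat.div_lt_iff_lt_mul hN]
  have h3 : L * N * N = N ^ 2 * L := by ring
  omega

/-! ### State index types -/

abbrev StT (N : ℕ) : Type := Unit ⊕ (Fin N ⊕ Fin N) ⊕ (Fin N ⊕ Fin N)

abbrev FT (N : ℕ) : Type := Fin N ⊕ Fin N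

def eqS (N : ℕ) : StT N ≃ Fin (Fintype.card (StT N)) := Fintype.equivFin _

def eqF (N : ℕ) : FT N ≃ Fin (Fintype.card (FT N)) := Fintype.equivFin _

theorem card_StT (N : ℕ) : Fintype.card (StT N) = 1 + ((N + N) + (N + N)) := by
  simp

theorem card_FT (N : ℕ) : Fintype.card (FT N) = N + N := by
  simp

/-! ### The data of the construction -/

structure D (N L : ℕ) where
  t : Fin (N ^ 2 * L) → ℝ
  y : Fin (N ^ 2 * L) → ℝ

namespace D

variable {N L : ℕ} (P : D N L)

def Tn (j : ℕ) : ℝ := if h : j < N ^ 2 * L then P.t ⟨j, h⟩ else 0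

def Yn (j : ℕ) : ℝ := if h : j < N ^ 2 * L then P.y ⟨j, h⟩ else 0

def low (j : ℕ) : ℝ := if j = 0 then P.Tn 0 - 1 else P.Tn (j - 1)

def gap (j : ℕ) : ℝ := P.Tn j - P.low j

def Δv (j : ℕ) : ℝ := if j % N = 0 then P.Yn j else P.Yn j - P.Yn (j - 1)

def gmin : ℝ :=
  if h : ((Finset.range (N ^ 2 * L)).image P.gap).Nonempty then
    ((Finset.range (N ^ 2 * L)).image P.gap).min' h else 1

def Γc : ℝ := (1 + ∑ j ∈ Finset.range (N ^ 2 * L), |P.Δv j|) / P.gmin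

/-- knots: `es true` is the left knot `e⁺`, `es false` the right knot `e⁻`. -/
def es (b : Bool) (j : ℕ) : ℝ :=
  (P.Tn j + P.low j) / 2 - (if b then 1 else -1) * P.Δv j / (2 * P.Γc)

def ηv (b : Bool) (r k : ℕ) : ℝ :=
  P.es b (r * N + k) - (if r = 0 then 0 else P.es b ((r - 1) * N + k))

def Ar (r : ℕ) : ℝ := P.low (r * N)

def Dr (r : ℕ) : ℝ := P.Tn (r * N) - P.Ar r

/-! ### The layer maps -/

/-- State after the `l`-th activation layer (`1 ≤ l ≤ L`), evaluated at sample `i`. -/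
def Vst (l i : ℕ) : StT N → ℝ
  | Sum.inl _ => P.Tn i
  | Sum.inr (Sum.inl (Sum.inl a)) =>
      max ((P.Tn i - P.Ar ((l - 1) * N + a)) / P.Dr ((l - 1) * N + a)) 0
  | Sum.inr (Sum.inl (Sum.inr a)) =>
      max ((P.Tn i - P.Ar ((l - 1) * N + a)) / P.Dr ((l - 1) * N + a) - 1) 0
  | Sum.inr (Sum.inr (Sum.inl k)) =>
      ∑ r ∈ Finset.range ((l - 1) * N), P.ηv true r k * stepf N r i
  | Sum.inr (Sum.inr (Sum.inr k)) =>
      ∑ r ∈ Finset.range ((l - 1) * N), P.ηv false r k * stepf N r i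

/-- The middle affine layer going from state `l` to (pre-activation of) state `l+1`. -/
def Tmid (l : ℕ) (v : StT N → ℝ) : StT N → ℝ
  | Sum.inl _ => v (Sum.inl ())
  | Sum.inr (Sum.inl (Sum.inl a)) =>
      (v (Sum.inl ()) - P.Ar (l * N + a)) / P.Dr (l * N + a)
  | Sum.inr (Sum.inl (Sum.inr a)) =>
      (v (Sum.inl ()) - P.Ar (l * N + a)) / P.Dr (l * N + a) - 1
  | Sum.inr (Sum.inr (Sum.inl k)) =>
      v (Sum.inr (Sum.inr (Sum.inl k))) +
        ∑ a : Fin N, P.ηv true ((l - 1) * N + a) k *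
          (v (Sum.inr (Sum.inl (Sum.inl a))) - v (Sum.inr (Sum.inl (Sum.inr a))))
  | Sum.inr (Sum.inr (Sum.inr k)) =>
      v (Sum.inr (Sum.inr (Sum.inr k))) +
        ∑ a : Fin N, P.ηv false ((l - 1) * N + a) k *
          (v (Sum.inr (Sum.inl (Sum.inl a))) - v (Sum.inr (Sum.inl (Sum.inr a))))

/-- The penultimate affine layer. -/
def Tpen (v : StT N → ℝ) : FT N → ℝ
  | Sum.inl k =>
      v (Sum.inl ()) - (v (Sum.inr (Sum.inr (Sum.inl k))) +
        ∑ a : Fin N, P.ηv true ((L - 1) * N + a) k *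
          (v (Sum.inr (Sum.inl (Sum.inl a))) - v (Sum.inr (Sum.inl (Sum.inr a)))))
  | Sum.inr k =>
      v (Sum.inl ()) - (v (Sum.inr (Sum.inr (Sum.inr k))) +
        ∑ a : Fin N, P.ηv false ((L - 1) * N + a) k *
          (v (Sum.inr (Sum.inl (Sum.inl a))) - v (Sum.inr (Sum.inl (Sum.inr a)))))

/-- The output affine layer. -/
def Tout (v : FT N → ℝ) : Fin 1 → ℝ :=
  fun _ => P.Γc * ∑ k : Fin N, (v (Sum.inl k) - v (Sum.inr k))

/-- The input affine layer. -/
def T1 {d : ℕ} (w : Fin d → ℝ) (c : ℝ) (x : Fin d → ℝ) : StT N → ℝ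
  | Sum.inl _ => (∑ j, w j * x j) + c
  | Sum.inr (Sum.inl (Sum.inl a)) => ((∑ j, w j * x j) + c - P.Ar a) / P.Dr a
  | Sum.inr (Sum.inl (Sum.inr a)) => ((∑ j, w j * x j) + c - P.Ar a) / P.Dr a - 1
  | Sum.inr (Sum.inr _) => 0

/-! ### Affinity of the layer maps -/

theorem taffine_Tmid (l : ℕ) : TAffine (P.Tmid l) := by
  apply taffine_of
  intro i
  match i with
  | Sum.inl _ =>
      refine ⟨fun s => if s = Sum.inl () then 1 else 0, 0, fun x => ?_⟩
      rw [sum_if_single]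
      show x (Sum.inl ()) = 1 * x (Sum.inl ()) + 0
      ring
  | Sum.inr (Sum.inl (Sum.inl a)) =>
      refine ⟨fun s => if s = Sum.inl () then (1 / P.Dr (l * N + a)) else 0,
        -(P.Ar (l * N + a)) / P.Dr (l * N + a), fun x => ?_⟩
      rw [sum_if_single]
      show (x (Sum.inl ()) - P.Ar (l * N + a)) / P.Dr (l * N + a) = _
      rw [sub_div, neg_div]
      ring
  | Sum.inr (Sum.inl (Sum.inr a)) =>
      refine ⟨fun s => if s = Sum.inl () then (1 / P.Dr (l * N + a)) else 0,
        -(P.Ar (l * N + a)) / P.Dr (l * N + a) - 1, fun x => ?_⟩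
      rw [sum_if_single]
      show (x (Sum.inl ()) - P.Ar (l * N + a)) / P.Dr (l * N + a) - 1 = _
      rw [sub_div, neg_div]
      ring
  | Sum.inr (Sum.inr (Sum.inl k)) =>
      refine ⟨fun s => match s with
        | Sum.inl _ => 0
        | Sum.inr (Sum.inl (Sum.inl a)) => P.ηv true ((l - 1) * N + a) k
        | Sum.inr (Sum.inl (Sum.inr a)) => -(P.ηv true ((l - 1) * N + a) k)
        | Sum.inr (Sum.inr (Sum.inl k')) => if k' = k then 1 else 0
        | Sum.inr (Sum.inr (Sum.inr _)) => 0, 0, fun x => ?_⟩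
      show x (Sum.inr (Sum.inr (Sum.inl k))) + ∑ a : Fin N, _ = _
      simp only [Fintype.sum_sum_type]
      simp only [ite_mul, one_mul, zero_mul, neg_mul, Finset.sum_ite_eq', Finset.mem_univ,
        if_true, Finset.sum_const_zero, mul_sub, Finset.sum_sub_distrib, Finset.sum_neg_distrib]
      ring
  | Sum.inr (Sum.inr (Sum.inr k)) =>
      refine ⟨fun s => match s with
        | Sum.inl _ => 0
        | Sum.inr (Sum.inl (Sum.inl a)) => P.ηv false ((l - 1) * N + a) k
        | Sum.inr (Sum.inl (Sum.inr a)) => -(P.ηv false ((l - 1) * N + a) k)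
        | Sum.inr (Sum.inr (Sum.inl _)) => 0
        | Sum.inr (Sum.inr (Sum.inr k')) => if k' = k then 1 else 0, 0, fun x => ?_⟩
      show x (Sum.inr (Sum.inr (Sum.inr k))) + ∑ a : Fin N, _ = _
      simp only [Fintype.sum_sum_type]
      simp only [ite_mul, one_mul, zero_mul, neg_mul, Finset.sum_ite_eq', Finset.mem_univ,
        if_true, Finset.sum_const_zero, mul_sub, Finset.sum_sub_distrib, Finset.sum_neg_distrib]
      ring

theorem taffine_Tpen : TAffine P.Tpen := by
  apply taffine_of
  intro i
  match i with
  | Sum.inl k =>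
      refine ⟨fun s => match s with
        | Sum.inl _ => 1
        | Sum.inr (Sum.inl (Sum.inl a)) => -(P.ηv true ((L - 1) * N + a) k)
        | Sum.inr (Sum.inl (Sum.inr a)) => P.ηv true ((L - 1) * N + a) k
        | Sum.inr (Sum.inr (Sum.inl k')) => if k' = k then -1 else 0
        | Sum.inr (Sum.inr (Sum.inr _)) => 0, 0, fun x => ?_⟩
      show x (Sum.inl ()) - (x (Sum.inr (Sum.inr (Sum.inl k))) + ∑ a : Fin N, _) = _
      simp only [Fintype.sum_sum_type]
      simp only [ite_mul, one_mul, zero_mul, neg_mul, neg_one_mul, Finset.sum_ite_eq',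
        Finset.mem_univ, if_true, Finset.sum_const_zero, mul_sub, Finset.sum_sub_distrib,
        Finset.sum_neg_distrib, Fintype.sum_unique, PUnit.default_eq_unit]
      ring
  | Sum.inr k =>
      refine ⟨fun s => match s with
        | Sum.inl _ => 1
        | Sum.inr (Sum.inl (Sum.inl a)) => -(P.ηv false ((L - 1) * N + a) k)
        | Sum.inr (Sum.inl (Sum.inr a)) => P.ηv false ((L - 1) * N + a) k
        | Sum.inr (Sum.inr (Sum.inl _)) => 0
        | Sum.inr (Sum.inr (Sum.inr k')) => if k' = k then -1 else 0, 0, fun x => ?_⟩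
      show x (Sum.inl ()) - (x (Sum.inr (Sum.inr (Sum.inr k))) + ∑ a : Fin N, _) = _
      simp only [Fintype.sum_sum_type]
      simp only [ite_mul, one_mul, zero_mul, neg_mul, neg_one_mul, Finset.sum_ite_eq',
        Finset.mem_univ, if_true, Finset.sum_const_zero, mul_sub, Finset.sum_sub_distrib,
        Finset.sum_neg_distrib, Fintype.sum_unique, PUnit.default_eq_unit]
      ring

theorem taffine_Tout : TAffine P.Tout := by
  apply taffine_of
  intro i
  refine ⟨fun s => match s with
    | Sum.inl _ => P.Γc
    | Sum.inr _ => -P.Γc, 0, fun x => ?_⟩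
  show P.Γc * ∑ k : Fin N, (x (Sum.inl k) - x (Sum.inr k)) = _
  simp only [Fintype.sum_sum_type]
  simp only [neg_mul, Finset.sum_neg_distrib, Finset.mul_sum, mul_sub, Finset.sum_sub_distrib]
  ring

theorem taffine_T1 {d : ℕ} (w : Fin d → ℝ) (c : ℝ) : TAffine (P.T1 w c) := by
  apply taffine_of
  intro i
  match i with
  | Sum.inl _ => exact ⟨w, c, fun x => rfl⟩
  | Sum.inr (Sum.inl (Sum.inl a)) =>
      refine ⟨fun j => w j / P.Dr a, (c - P.Ar a) / P.Dr a, fun x => ?_⟩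
      show ((∑ j, w j * x j) + c - P.Ar a) / P.Dr a = _
      have h : (∑ j, w j / P.Dr (a : ℕ) * x j) = (∑ j, w j * x j) / P.Dr (a : ℕ) := by
        rw [Finset.sum_div]
        exact Finset.sum_congr rfl fun j _ => by ring
      rw [h]
      ring
  | Sum.inr (Sum.inl (Sum.inr a)) =>
      refine ⟨fun j => w j / P.Dr a, (c - P.Ar a) / P.Dr a - 1, fun x => ?_⟩
      show ((∑ j, w j * x j) + c - P.Ar a) / P.Dr a - 1 = _
      have h : (∑ j, w j / P.Dr (a : ℕ) * x j) = (∑ j, w j * x j) / P.Dr (a : ℕ) := by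
        rw [Finset.sum_div]
        exact Finset.sum_congr rfl fun j _ => by ring
      rw [h]
      ring
  | Sum.inr (Sum.inr s) =>
      exact ⟨fun _ => 0, 0, fun x => by simp [T1]⟩

/-! ### Basic facts, under the standing hypotheses -/

section Facts

variable (hN : 0 < N) (hL : 0 < L) (ht : StrictMono P.t) (ht2 : ∀ i, (2 : ℝ) ≤ P.t i)

include ht in
theorem Tn_mono {a b : ℕ} (hab : a ≤ b) (hb : b < N ^ 2 * L) : P.Tn a ≤ P.Tn b := by
  have ha : a < N ^ 2 * L := lt_of_le_of_lt hab hb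
  rw [Tn, Tn, dif_pos ha, dif_pos hb]
  exact ht.monotone (show (⟨a, ha⟩ : Fin (N ^ 2 * L)) ≤ ⟨b, hb⟩ from hab)

include ht in
theorem Tn_strict {a b : ℕ} (hab : a < b) (hb : b < N ^ 2 * L) : P.Tn a < P.Tn b := by
  have ha : a < N ^ 2 * L := lt_trans hab hb
  rw [Tn, Tn, dif_pos ha, dif_pos hb]
  exact ht (show (⟨a, ha⟩ : Fin (N ^ 2 * L)) < ⟨b, hb⟩ from hab)

include ht2 in
theorem Tn_ge2 {j : ℕ} (hj : j < N ^ 2 * L) : (2 : ℝ) ≤ P.Tn j := by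
  rw [Tn, dif_pos hj]; exact ht2 _

include ht ht2 in
theorem low_lt {j : ℕ} (hj : j < N ^ 2 * L) : P.low j < P.Tn j := by
  rw [low]
  split
  · next h =>
      subst h
      linarith
  · next h =>
      exact P.Tn_strict ht (by omega) hj

include ht ht2 in
theorem low_ge1 {j : ℕ} (hj : j < N ^ 2 * L) : (1 : ℝ) ≤ P.low j := by
  rw [low]
  split
  · have := P.Tn_ge2 ht2 (show 0 < N ^ 2 * L by omega)
    linarith
  · have := P.Tn_ge2 ht2 (show j - 1 < N ^ 2 * L by omega)
    linarith

include ht ht2 in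
theorem gap_pos {j : ℕ} (hj : j < N ^ 2 * L) : 0 < P.gap j :=
  sub_pos.2 (P.low_lt ht ht2 hj)

theorem gmin_le {j : ℕ} (hj : j < N ^ 2 * L) : P.gmin ≤ P.gap j := by
  have hne : ((Finset.range (N ^ 2 * L)).image P.gap).Nonempty :=
    ⟨P.gap j, Finset.mem_image_of_mem _ (Finset.mem_range.2 hj)⟩
  rw [gmin, dif_pos hne]
  exact Finset.min'_le _ _ (Finset.mem_image_of_mem _ (Finset.mem_range.2 hj))

include ht ht2 in
theorem gmin_pos (hMpos : 0 < N ^ 2 * L) : 0 < P.gmin := by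
  have hne : ((Finset.range (N ^ 2 * L)).image P.gap).Nonempty :=
    ⟨P.gap 0, Finset.mem_image_of_mem _ (Finset.mem_range.2 hMpos)⟩
  rw [gmin, dif_pos hne]
  obtain ⟨j, hj, hje⟩ := Finset.mem_image.1 (Finset.min'_mem _ hne)
  rw [← hje]
  exact P.gap_pos ht ht2 (Finset.mem_range.1 hj)

include ht ht2 in
theorem Γc_pos (hMpos : 0 < N ^ 2 * L) : 0 < P.Γc := by
  have h1 : (0 : ℝ) < 1 + ∑ j ∈ Finset.range (N ^ 2 * L), |P.Δv j| := by
    have : (0 : ℝ) ≤ ∑ j ∈ Finset.range (N ^ 2 * L), |P.Δv j| :=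
      Finset.sum_nonneg fun j _ => abs_nonneg _
    linarith
  exact div_pos h1 (P.gmin_pos ht ht2 hMpos)

include ht ht2 in
theorem abs_Δ_lt {j : ℕ} (hj : j < N ^ 2 * L) : |P.Δv j| < P.Γc * P.gap j := by
  have hg := P.gmin_pos ht ht2 (by omega)
  have hgj := P.gmin_le hj
  have hsum : |P.Δv j| ≤ ∑ j' ∈ Finset.range (N ^ 2 * L), |P.Δv j'| :=
    Finset.single_le_sum (fun j' _ => abs_nonneg (P.Δv j')) (Finset.mem_range.2 hj)
  have hΓ : P.Γc * P.gmin = 1 + ∑ j' ∈ Finset.range (N ^ 2 * L), |P.Δv j'| :=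
    div_mul_cancel₀ _ (ne_of_gt hg)
  have hΓpos := P.Γc_pos ht ht2 (by omega)
  have hmm : P.Γc * P.gmin ≤ P.Γc * P.gap j :=
    mul_le_mul_of_nonneg_left hgj (le_of_lt hΓpos)
  calc |P.Δv j| ≤ ∑ j' ∈ Finset.range (N ^ 2 * L), |P.Δv j'| := hsum
    _ < P.Γc * P.gmin := by rw [hΓ]; linarith
    _ ≤ P.Γc * P.gap j := hmm

include ht ht2 in
theorem knot_bounds {b : Bool} {j : ℕ} (hj : j < N ^ 2 * L) :
    P.low j < P.es b j ∧ P.es b j < P.Tn j := by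
  have hΓ := P.Γc_pos ht ht2 (by omega)
  have habs := P.abs_Δ_lt ht ht2 hj
  have h2 : |P.Δv j / (2 * P.Γc)| < P.gap j / 2 := by
    rw [abs_div, abs_of_pos (by linarith : (0:ℝ) < 2 * P.Γc),
      div_lt_div_iff₀ (by linarith : (0:ℝ) < 2 * P.Γc) (by norm_num : (0:ℝ) < 2)]
    nlinarith [habs]
  have hq1 : (if b then (1:ℝ) else -1) * P.Δv j / (2 * P.Γc) ≤ |P.Δv j / (2 * P.Γc)| := by
    rcases b with _ | _
    · simp only [Bool.false_eq_true, if_false]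
      rw [neg_one_mul, neg_div, ← abs_neg]
      exact le_abs_self _
    · simp only [if_true]
      rw [one_mul]
      exact le_abs_self _
  have hq2 : -|P.Δv j / (2 * P.Γc)| ≤ (if b then (1:ℝ) else -1) * P.Δv j / (2 * P.Γc) := by
    rcases b with _ | _
    · simp only [Bool.false_eq_true, if_false]
      rw [neg_one_mul, neg_div]
      exact neg_le_neg (le_abs_self _)
    · simp only [if_true]
      rw [one_mul]
      exact neg_abs_le _
  have hgapeq : P.gap j = P.Tn j - P.low j := rfl
  rw [es]
  constructor <;> linarith

include ht ht2 in
theorem knot_gt {b : Bool} {j : ℕ} (hj : j < N ^ 2 * L) : P.low j < P.es b j :=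
  (P.knot_bounds ht ht2 hj).1

include ht ht2 in
theorem knot_lt {b : Bool} {j : ℕ} (hj : j < N ^ 2 * L) : P.es b j < P.Tn j :=
  (P.knot_bounds ht ht2 hj).2

include ht ht2 in
theorem knot_diff {j : ℕ} (hj : j < N ^ 2 * L) :
    P.Γc * (P.es false j - P.es true j) = P.Δv j := by
  have hΓ := P.Γc_pos ht ht2 (by omega)
  have hne : P.Γc ≠ 0 := ne_of_gt hΓ
  have h1 : P.es false j - P.es true j = P.Δv j / P.Γc := by
    rw [es, es]
    simp only [Bool.false_eq_true, if_false, if_true]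
    rw [neg_one_mul, neg_div, one_mul]
    field_simp
    ring
  rw [h1, mul_comm, div_mul_cancel₀ _ hne]

include ht ht2 in
theorem es_pos {b : Bool} {j : ℕ} (hj : j < N ^ 2 * L) : 0 < P.es b j := by
  have h1 := P.knot_gt ht ht2 (b := b) hj
  have h2 := P.low_ge1 ht ht2 hj
  linarith

include hN ht ht2 in
theorem η_nonneg {b : Bool} {r k : ℕ} (hr : r < L * N) (hk : k < N) : 0 ≤ P.ηv b r k := by
  rw [ηv]
  rcases Nat.eq_zero_or_pos r with hr0 | hr0
  · subst hr0
    rw [if_pos rfl, sub_zero]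
    have := P.es_pos ht ht2 (b := b) (runIdx_lt hr hk)
    simp only [Nat.zero_mul, Nat.zero_add] at this ⊢
    linarith
  · rw [if_neg (by omega)]
    have hj1 : r * N + k < N ^ 2 * L := runIdx_lt hr hk
    have hj2 : (r - 1) * N + k < N ^ 2 * L := runIdx_lt (show r - 1 < L * N by omega) hk
    have hmul : r * N = (r - 1) * N + N := pred_mul_add hr0
    have key : (r - 1) * N + k ≤ r * N + k - 1 := by omega
    have hrN : 0 < r * N := Nat.mul_pos hr0 hN
    have h1 : P.es b ((r - 1) * N + k) < P.Tn ((r - 1) * N + k) := P.knot_lt ht ht2 hj2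
    have h2 : P.Tn ((r - 1) * N + k) ≤ P.low (r * N + k) := by
      rw [low, if_neg (by omega)]
      exact P.Tn_mono ht key (by omega)
    have h3 : P.low (r * N + k) < P.es b (r * N + k) := P.knot_gt ht ht2 hj1
    linarith

include hN ht ht2 in
theorem stepval {r i : ℕ} (hr : r < L * N) (hi : i < N ^ 2 * L) :
    max ((P.Tn i - P.Ar r) / P.Dr r) 0 - max ((P.Tn i - P.Ar r) / P.Dr r - 1) 0 =
      stepf N r i := by
  have hrn : r * N < N ^ 2 * L := by
    have := runIdx_lt (k := 0) hr hN
    omega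
  have hD : 0 < P.Dr r := by
    rw [Dr, Ar]
    exact P.gap_pos ht ht2 hrn
  rw [stepf]
  by_cases hle : r * N ≤ i
  · have h1 : P.Tn (r * N) ≤ P.Tn i := P.Tn_mono ht hle hi
    have harg : 1 ≤ (P.Tn i - P.Ar r) / P.Dr r := by
      rw [le_div_iff₀ hD]
      rw [Dr] at *
      linarith
    rw [if_pos hle, max_eq_left (by linarith), max_eq_left (by linarith)]
    ring
  · have hrpos : 0 < r * N := by omega
    have harg : (P.Tn i - P.Ar r) / P.Dr r ≤ 0 := by
      have h2 : P.Tn i ≤ P.Ar r := by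
        rw [Ar, low, if_neg (by omega)]
        exact P.Tn_mono ht (by omega) (by omega)
      exact div_nonpos_of_nonpos_of_nonneg (by linarith) (le_of_lt hD)
    rw [if_neg hle, max_eq_right harg, max_eq_right (by linarith)]
    ring

theorem tele (b : Bool) (k : ℕ) : ∀ q : ℕ,
    ∑ r ∈ Finset.range (q + 1), P.ηv b r k = P.es b (q * N + k) := by
  intro q
  induction q with
  | zero => simp [ηv]
  | succ q ih =>
      rw [Finset.sum_range_succ, ih, ηv, if_neg (by omega)]
      simp only [Nat.add_sub_cancel]
      ring

include hN ht ht2 in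
theorem full_stair {b : Bool} {k i : ℕ} (hk : k < N) (hi : i < N ^ 2 * L) :
    ∑ r ∈ Finset.range (L * N), P.ηv b r k * stepf N r i = P.es b ((i / N) * N + k) := by
  have hq : i / N + 1 ≤ L * N := div_lt_LN hN hi
  rw [sum_range_split _ hq]
  have h2 : ∑ r ∈ Finset.Ico (i / N + 1) (L * N), P.ηv b r k * stepf N r i = 0 := by
    apply Finset.sum_eq_zero
    intro r hr
    rw [Finset.mem_Ico] at hr
    have hno : ¬ (r * N ≤ i) := by
      intro hcon
      have := (Nat.le_div_iff_mul_le hN).2 hcon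
      omega
    rw [stepf, if_neg hno, mul_zero]
  rw [h2, add_zero]
  have h1 : ∀ r ∈ Finset.range (i / N + 1), P.ηv b r k * stepf N r i = P.ηv b r k := by
    intro r hr
    rw [Finset.mem_range] at hr
    have hyes : r * N ≤ i := (Nat.le_div_iff_mul_le hN).1 (by omega)
    rw [stepf, if_pos hyes, mul_one]
  rw [Finset.sum_congr rfl h1, P.tele]

-- Key evaluation of the middle layers.
include hN ht ht2 in
theorem mid_eval {l i : ℕ} (hl1 : 1 ≤ l) (hl2 : l + 1 ≤ L) (hi : i < N ^ 2 * L) :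
    ∀ s, max (P.Tmid l (P.Vst l i) s) 0 = P.Vst (l + 1) i s := by
  have hsplit : l * N = (l - 1) * N + N := pred_mul_add hl1
  have hnonneg : ∀ m : ℕ, m ≤ l * N → ∀ (bb : Bool) (k : Fin N),
      (0:ℝ) ≤ ∑ r ∈ Finset.range m, P.ηv bb r k * stepf N r i := by
    intro m hm bb k
    apply Finset.sum_nonneg
    intro r hr
    rw [Finset.mem_range] at hr
    have hrLN : r < L * N := by
      have : l * N ≤ L * N := Nat.mul_le_mul_right N (by omega)
      omega
    have h1 := P.η_nonneg hN ht ht2 (b := bb) hrLN k.2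
    have h2 := stepf_nonneg N r i
    positivity
  have hstep : ∀ (bb : Bool) (k : Fin N) (a : Fin N),
      P.ηv bb ((l - 1) * N + a) k *
        (max ((P.Tn i - P.Ar ((l - 1) * N + a)) / P.Dr ((l - 1) * N + a)) 0 -
         max ((P.Tn i - P.Ar ((l - 1) * N + a)) / P.Dr ((l - 1) * N + a) - 1) 0) =
      P.ηv bb ((l - 1) * N + a) k * stepf N ((l - 1) * N + a) i := by
    intro bb k a
    congr 1
    apply P.stepval hN ht ht2 _ hi
    calc (l - 1) * N + (a : ℕ) < (l - 1) * N + N := by omega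
      _ = l * N := hsplit.symm
      _ ≤ L * N := Nat.mul_le_mul_right N (by omega)
  intro s
  match s with
  | Sum.inl _ =>
      show max (P.Tn i) 0 = P.Tn i
      have := P.Tn_ge2 ht2 hi
      exact max_eq_left (by linarith)
  | Sum.inr (Sum.inl (Sum.inl a)) =>
      show max ((P.Tn i - P.Ar (l * N + a)) / P.Dr (l * N + a)) 0 =
        max ((P.Tn i - P.Ar ((l + 1 - 1) * N + a)) / P.Dr ((l + 1 - 1) * N + a)) 0
      simp only [Nat.add_sub_cancel]
  | Sum.inr (Sum.inl (Sum.inr a)) =>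
      show max ((P.Tn i - P.Ar (l * N + a)) / P.Dr (l * N + a) - 1) 0 =
        max ((P.Tn i - P.Ar ((l + 1 - 1) * N + a)) / P.Dr ((l + 1 - 1) * N + a) - 1) 0
      simp only [Nat.add_sub_cancel]
  | Sum.inr (Sum.inr (Sum.inl k)) =>
      show max ((∑ r ∈ Finset.range ((l - 1) * N), P.ηv true r k * stepf N r i) +
          ∑ a : Fin N, P.ηv true ((l - 1) * N + a) k *
            (max ((P.Tn i - P.Ar ((l - 1) * N + a)) / P.Dr ((l - 1) * N + a)) 0 -
             max ((P.Tn i - P.Ar ((l - 1) * N + a)) / P.Dr ((l - 1) * N + a) - 1) 0)) 0 =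
        ∑ r ∈ Finset.range ((l + 1 - 1) * N), P.ηv true r k * stepf N r i
      rw [Finset.sum_congr rfl fun (a : Fin N) _ => hstep true k a,
        fin_sum_shift (fun r => P.ηv true r k * stepf N r i) ((l - 1) * N) N,
        ← sum_range_split (fun r => P.ηv true r k * stepf N r i)
          (show (l - 1) * N ≤ (l - 1) * N + N by omega),
        ← hsplit, Nat.add_sub_cancel]
      exact max_eq_left (hnonneg (l * N) le_rfl true k)
  | Sum.inr (Sum.inr (Sum.inr k)) =>
      show max ((∑ r ∈ Finset.range ((l - 1) * N), P.ηv false r k * stepf N r i) +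
          ∑ a : Fin N, P.ηv false ((l - 1) * N + a) k *
            (max ((P.Tn i - P.Ar ((l - 1) * N + a)) / P.Dr ((l - 1) * N + a)) 0 -
             max ((P.Tn i - P.Ar ((l - 1) * N + a)) / P.Dr ((l - 1) * N + a) - 1) 0)) 0 =
        ∑ r ∈ Finset.range ((l + 1 - 1) * N), P.ηv false r k * stepf N r i
      rw [Finset.sum_congr rfl fun (a : Fin N) _ => hstep false k a,
        fin_sum_shift (fun r => P.ηv false r k * stepf N r i) ((l - 1) * N) N,
        ← sum_range_split (fun r => P.ηv false r k * stepf N r i)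
          (show (l - 1) * N ≤ (l - 1) * N + N by omega),
        ← hsplit, Nat.add_sub_cancel]
      exact max_eq_left (hnonneg (l * N) le_rfl false k)

include hN hL ht ht2 in
theorem pen_eval {i : ℕ} (hi : i < N ^ 2 * L) (b : Bool) (k : Fin N) :
    P.Tpen (P.Vst L i) (if b then Sum.inl k else Sum.inr k) =
      P.Tn i - P.es b ((i / N) * N + k) := by
  have hsplit : L * N = (L - 1) * N + N := pred_mul_add hL
  have key : ∀ bb : Bool,
      (∑ r ∈ Finset.range ((L - 1) * N), P.ηv bb r k * stepf N r i) +
        ∑ a : Fin N, P.ηv bb ((L - 1) * N + (a : ℕ)) k *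
          (max ((P.Tn i - P.Ar ((L - 1) * N + a)) / P.Dr ((L - 1) * N + a)) 0 -
           max ((P.Tn i - P.Ar ((L - 1) * N + a)) / P.Dr ((L - 1) * N + a) - 1) 0)
      = P.es bb ((i / N) * N + k) := by
    intro bb
    have hstep' : ∀ a : Fin N,
        P.ηv bb ((L - 1) * N + a) k *
          (max ((P.Tn i - P.Ar ((L - 1) * N + a)) / P.Dr ((L - 1) * N + a)) 0 -
           max ((P.Tn i - P.Ar ((L - 1) * N + a)) / P.Dr ((L - 1) * N + a) - 1) 0) =
        P.ηv bb ((L - 1) * N + a) k * stepf N ((L - 1) * N + a) i := by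
      intro a
      congr 1
      apply P.stepval hN ht ht2 _ hi
      calc (L - 1) * N + (a : ℕ) < (L - 1) * N + N := by omega
        _ = L * N := hsplit.symm
    rw [Finset.sum_congr rfl fun a _ => hstep' a,
      fin_sum_shift (fun r => P.ηv bb r k * stepf N r i) ((L - 1) * N) N,
      ← sum_range_split (fun r => P.ηv bb r k * stepf N r i)
        (show (L - 1) * N ≤ (L - 1) * N + N by omega),
      ← hsplit]
    exact P.full_stair hN ht ht2 k.2 hi
  rcases b with _ | _
  · simp only [Bool.false_eq_true, if_false]
    show P.Tn i - ((∑ r ∈ Finset.range ((L - 1) * N), P.ηv false r k * stepf N r i) +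
        ∑ a : Fin N, P.ηv false ((L - 1) * N + (a : ℕ)) k *
          (max ((P.Tn i - P.Ar ((L - 1) * N + a)) / P.Dr ((L - 1) * N + a)) 0 -
           max ((P.Tn i - P.Ar ((L - 1) * N + a)) / P.Dr ((L - 1) * N + a) - 1) 0)) = _
    rw [key false]
  · simp only [if_true]
    show P.Tn i - ((∑ r ∈ Finset.range ((L - 1) * N), P.ηv true r k * stepf N r i) +
        ∑ a : Fin N, P.ηv true ((L - 1) * N + (a : ℕ)) k *
          (max ((P.Tn i - P.Ar ((L - 1) * N + a)) / P.Dr ((L - 1) * N + a)) 0 -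
           max ((P.Tn i - P.Ar ((L - 1) * N + a)) / P.Dr ((L - 1) * N + a) - 1) 0)) = _
    rw [key true]

include hN in
theorem ytele {r : ℕ} : ∀ b : ℕ, b < N →
    ∑ k ∈ Finset.range (b + 1), P.Δv (r * N + k) = P.Yn (r * N + b) := by
  intro b
  induction b with
  | zero =>
      intro _
      rw [Finset.sum_range_one]
      simp only [Nat.add_zero]
      rw [Δv, if_pos (Nat.mul_mod_left r N)]
  | succ b ih =>
      intro hb
      rw [Finset.sum_range_succ, ih (by omega), Δv]
      have hmod : (r * N + (b + 1)) % N = b + 1 := by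
        rw [Nat.add_mod, Nat.mul_mod_left]
        simp [Nat.mod_eq_of_lt hb]
      rw [if_neg (by omega)]
      have hone : r * N + (b + 1) - 1 = r * N + b := by omega
      rw [hone]
      ring

include hN hL ht ht2 in
theorem final_eval {i : ℕ} (hi : i < N ^ 2 * L) :
    P.Γc * ∑ k : Fin N,
      (max (P.Tn i - P.es true ((i / N) * N + k)) 0 -
       max (P.Tn i - P.es false ((i / N) * N + k)) 0) = P.Yn i := by
  set r := i / N with hr
  set kb := i % N with hkb
  have hrLN : r < L * N := div_lt_LN hN hi
  have hkbN : kb < N := Nat.mod_lt _ hN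
  have hdm := Nat.div_add_mod i N
  have hcomm : (i / N) * N = N * (i / N) := Nat.mul_comm _ _
  have hieq : r * N + kb = i := by rw [hr, hkb]; omega
  have hper : ∀ k : Fin N,
      max (P.Tn i - P.es true (r * N + k)) 0 - max (P.Tn i - P.es false (r * N + k)) 0 =
        if (k : ℕ) ≤ kb then P.es false (r * N + k) - P.es true (r * N + k) else 0 := by
    intro k
    have hjM : r * N + (k : ℕ) < N ^ 2 * L := runIdx_lt hrLN k.2
    by_cases hk : (k : ℕ) ≤ kb
    · rw [if_pos hk]
      have hle : r * N + (k : ℕ) ≤ i := by omega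
      have h1 : P.es true (r * N + k) < P.Tn i :=
        lt_of_lt_of_le (P.knot_lt ht ht2 hjM) (P.Tn_mono ht hle hi)
      have h2 : P.es false (r * N + k) < P.Tn i :=
        lt_of_lt_of_le (P.knot_lt ht ht2 hjM) (P.Tn_mono ht hle hi)
      rw [max_eq_left (by linarith), max_eq_left (by linarith)]
      ring
    · rw [if_neg hk]
      have hgt : i < r * N + (k : ℕ) := by omega
      have hTle : P.Tn i ≤ P.low (r * N + k) := by
        rw [low, if_neg (by omega)]
        exact P.Tn_mono ht (by omega) (by omega)
      have h1 : P.Tn i < P.es true (r * N + k) :=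
        lt_of_le_of_lt hTle (P.knot_gt ht ht2 hjM)
      have h2 : P.Tn i < P.es false (r * N + k) :=
        lt_of_le_of_lt hTle (P.knot_gt ht ht2 hjM)
      rw [max_eq_right (by linarith), max_eq_right (by linarith)]
      ring
  rw [Finset.mul_sum, Finset.sum_congr rfl fun k _ => by rw [hper k]]
  have hmul : ∀ k : Fin N, P.Γc * (if (k : ℕ) ≤ kb then
      P.es false (r * N + k) - P.es true (r * N + k) else 0) =
      (if (k : ℕ) ≤ kb then P.Δv (r * N + k) else 0) := by
    intro k
    rw [mul_ite, mul_zero]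
    by_cases hk : (k : ℕ) ≤ kb
    · rw [if_pos hk, if_pos hk, P.knot_diff ht ht2 (runIdx_lt hrLN k.2)]
    · rw [if_neg hk, if_neg hk]
  rw [Finset.sum_congr rfl fun k _ => hmul k]
  have hconv : ∑ k : Fin N, (if (k : ℕ) ≤ kb then P.Δv (r * N + (k : ℕ)) else 0) =
      ∑ k ∈ Finset.range N, (if k ≤ kb then P.Δv (r * N + k) else 0) :=
    Fin.sum_univ_eq_sum_range (fun k => if k ≤ kb then P.Δv (r * N + k) else 0) N
  rw [hconv, sum_range_split _ (show kb + 1 ≤ N by omega)]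
  have hz : ∑ k ∈ Finset.Ico (kb + 1) N, (if k ≤ kb then P.Δv (r * N + k) else 0) = 0 := by
    apply Finset.sum_eq_zero
    intro k hk
    rw [Finset.mem_Ico] at hk
    rw [if_neg (by omega)]
  have ho : ∑ k ∈ Finset.range (kb + 1), (if k ≤ kb then P.Δv (r * N + k) else 0) =
      ∑ k ∈ Finset.range (kb + 1), P.Δv (r * N + k) := by
    apply Finset.sum_congr rfl
    intro k hk
    rw [Finset.mem_range] at hk
    rw [if_pos (by omega)]
  rw [hz, add_zero, ho, P.ytele hN kb hkbN, hieq]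

include ht2 in
theorem t1_eval {d : ℕ} {w : Fin d → ℝ} {c : ℝ} {x : Fin d → ℝ} {i : ℕ}
    (hi : i < N ^ 2 * L) (hx : (∑ j, w j * x j) + c = P.Tn i) :
    ∀ s, max (P.T1 w c x s) 0 = P.Vst 1 i s := by
  intro s
  match s with
  | Sum.inl _ =>
      show max ((∑ j, w j * x j) + c) 0 = P.Tn i
      rw [hx]
      have h2 : (2:ℝ) ≤ P.Tn i := by rw [Tn, dif_pos hi]; exact ht2 _
      exact max_eq_left (by linarith)
  | Sum.inr (Sum.inl (Sum.inl a)) =>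
      show max (((∑ j, w j * x j) + c - P.Ar a) / P.Dr a) 0 =
        max ((P.Tn i - P.Ar ((1 - 1) * N + a)) / P.Dr ((1 - 1) * N + a)) 0
      rw [hx]
      norm_num
  | Sum.inr (Sum.inl (Sum.inr a)) =>
      show max (((∑ j, w j * x j) + c - P.Ar a) / P.Dr a - 1) 0 =
        max ((P.Tn i - P.Ar ((1 - 1) * N + a)) / P.Dr ((1 - 1) * N + a) - 1) 0
      rw [hx]
      norm_num
  | Sum.inr (Sum.inr (Sum.inl k)) =>
      show max 0 0 = ∑ r ∈ Finset.range ((1 - 1) * N), P.ηv true r k * stepf N r i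
      norm_num
  | Sum.inr (Sum.inr (Sum.inr k)) =>
      show max 0 0 = ∑ r ∈ Finset.range ((1 - 1) * N), P.ηv false r k * stepf N r i
      norm_num

end Facts

end D

end Stmt9Aux

namespace Stmt9Aux

namespace D

variable {N L : ℕ} (P : D N L)

/-! ### Fin-indexed versions of the layers -/

def TmidF (l : ℕ) : (Fin (Fintype.card (StT N)) → ℝ) → Fin (Fintype.card (StT N)) → ℝ :=
  fun v i => P.Tmid l (fun s => v (eqS N s)) ((eqS N).symm i)

def TpenF : (Fin (Fintype.card (StT N)) → ℝ) → Fin (Fintype.card (FT N)) → ℝ :=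
  fun v i => P.Tpen (fun s => v (eqS N s)) ((eqF N).symm i)

def ToutF : (Fin (Fintype.card (FT N)) → ℝ) → Fin 1 → ℝ :=
  fun v i => P.Tout (fun s => v (eqF N s)) ((Equiv.refl (Fin 1)).symm i)

def T1F {d : ℕ} (w : Fin d → ℝ) (c : ℝ) : (Fin d → ℝ) → Fin (Fintype.card (StT N)) → ℝ :=
  fun x i => P.T1 w c (fun a => x ((Equiv.refl (Fin d)) a)) ((eqS N).symm i)

theorem isAffine_TmidF (l : ℕ) :
    IsAffineMap (Fintype.card (StT N)) (Fintype.card (StT N)) (P.TmidF l) :=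
  isAffineMap_reindex (eqS N) (eqS N) (P.taffine_Tmid l)

theorem isAffine_TpenF :
    IsAffineMap (Fintype.card (StT N)) (Fintype.card (FT N)) P.TpenF :=
  isAffineMap_reindex (eqS N) (eqF N) P.taffine_Tpen

theorem isAffine_ToutF : IsAffineMap (Fintype.card (FT N)) 1 P.ToutF :=
  isAffineMap_reindex (eqF N) (Equiv.refl (Fin 1)) P.taffine_Tout

theorem isAffine_T1F {d : ℕ} (w : Fin d → ℝ) (c : ℝ) :
    IsAffineMap d (Fintype.card (StT N)) (P.T1F w c) :=
  isAffineMap_reindex (Equiv.refl (Fin d)) (eqS N) (P.taffine_T1 w c)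

section Assemble

variable (hN : 0 < N) (hL : 0 < L) (ht : StrictMono P.t) (ht2 : ∀ i, (2 : ℝ) ≤ P.t i)

include hN hL ht ht2 in
theorem base_eval {i : ℕ} (hi : i < N ^ 2 * L) :
    P.Tout (fun s => max (P.Tpen (P.Vst L i) s) 0) = fun _ => P.Yn i := by
  have hp : ∀ k : Fin N, P.Tpen (P.Vst L i) (Sum.inl k) =
      P.Tn i - P.es true ((i / N) * N + k) := by
    intro k
    have h := P.pen_eval hN hL ht ht2 hi true k
    simpa using h
  have hm : ∀ k : Fin N, P.Tpen (P.Vst L i) (Sum.inr k) =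
      P.Tn i - P.es false ((i / N) * N + k) := by
    intro k
    have h := P.pen_eval hN hL ht ht2 hi false k
    simpa using h
  funext j
  show P.Γc * ∑ k : Fin N,
      (max (P.Tpen (P.Vst L i) (Sum.inl k)) 0 - max (P.Tpen (P.Vst L i) (Sum.inr k)) 0) = _
  calc P.Γc * ∑ k : Fin N,
      (max (P.Tpen (P.Vst L i) (Sum.inl k)) 0 - max (P.Tpen (P.Vst L i) (Sum.inr k)) 0)
      = P.Γc * ∑ k : Fin N,
        (max (P.Tn i - P.es true ((i / N) * N + k)) 0 -
         max (P.Tn i - P.es false ((i / N) * N + k)) 0) := by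
          congr 1
          exact Finset.sum_congr rfl fun k _ => by rw [hp k, hm k]
    _ = P.Yn i := P.final_eval hN hL ht ht2 hi

include hN hL ht ht2 in
theorem main_net {d : ℕ} (w : Fin d → ℝ) (c : ℝ) :
    ∃ φ : (Fin d → ℝ) → Fin 1 → ℝ, ReluNetExact d 1 φ (4 * N + 4) (L + 2) ∧
      ∀ i : ℕ, i < N ^ 2 * L → ∀ x : Fin d → ℝ,
        (∑ j, w j * x j) + c = P.Tn i → φ x = fun _ => P.Yn i := by
  have hcardS : Fintype.card (StT N) ≤ 4 * N + 4 := by rw [card_StT]; omega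
  have hcardF : Fintype.card (FT N) ≤ 4 * N + 4 := by rw [card_FT]; omega
  have tails : ∀ m : ℕ, m + 1 ≤ L →
      ∃ G : (Fin (Fintype.card (StT N)) → ℝ) → Fin 1 → ℝ,
        ReluNetExact (Fintype.card (StT N)) 1 G (4 * N + 4) (m + 2) ∧
        ∀ i : ℕ, i < N ^ 2 * L →
          G (fun p => P.Vst (L - m) i ((eqS N).symm p)) = fun _ => P.Yn i := by
    intro m
    induction m with
    | zero =>
        intro _
        refine ⟨fun v => P.ToutF (fun q => max (P.TpenF v q) 0), ?_, ?_⟩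
        · exact ReluNetExact.comp hcardF P.isAffine_TpenF
            (ReluNetExact.affine P.isAffine_ToutF)
        · intro i hi
          have h1 : ∀ q, P.TpenF (fun p => P.Vst (L - 0) i ((eqS N).symm p)) q
              = P.Tpen (P.Vst L i) ((eqF N).symm q) := by
            intro q
            show P.Tpen (fun s => P.Vst (L - 0) i ((eqS N).symm (eqS N s))) ((eqF N).symm q) = _
            congr 1
            funext s
            simp
          have h2 : (fun q => max (P.TpenF (fun p => P.Vst (L - 0) i ((eqS N).symm p)) q) 0)
              = fun q => max (P.Tpen (P.Vst L i) ((eqF N).symm q)) 0 := by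
            funext q
            rw [h1 q]
          show P.ToutF (fun q => max (P.TpenF (fun p => P.Vst (L - 0) i ((eqS N).symm p)) q) 0)
              = fun _ => P.Yn i
          rw [h2]
          have h3 : P.ToutF (fun q => max (P.Tpen (P.Vst L i) ((eqF N).symm q)) 0)
              = P.Tout (fun s => max (P.Tpen (P.Vst L i) s) 0) := by
            show P.Tout (fun s => max (P.Tpen (P.Vst L i) ((eqF N).symm (eqF N s))) 0) = _
            congr 1
            funext s
            simp
          rw [h3]
          exact P.base_eval hN hL ht ht2 hi
    | succ m ih =>
        intro hm1
        obtain ⟨G, hGnet, hGev⟩ := ih (by omega)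
        refine ⟨fun v => G (fun p => max (P.TmidF (L - (m + 1)) v p) 0), ?_, ?_⟩
        · exact ReluNetExact.comp hcardS (P.isAffine_TmidF (L - (m + 1))) hGnet
        · intro i hi
          have h1 : ∀ p, max (P.TmidF (L - (m + 1))
              (fun p' => P.Vst (L - (m + 1)) i ((eqS N).symm p')) p) 0
              = P.Vst (L - m) i ((eqS N).symm p) := by
            intro p
            have ha : P.TmidF (L - (m + 1)) (fun p' => P.Vst (L - (m + 1)) i ((eqS N).symm p')) p
                = P.Tmid (L - (m + 1)) (P.Vst (L - (m + 1)) i) ((eqS N).symm p) := by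
              show P.Tmid (L - (m + 1))
                (fun s => P.Vst (L - (m + 1)) i ((eqS N).symm (eqS N s))) ((eqS N).symm p) = _
              congr 1
              funext s
              simp
            rw [ha, P.mid_eval hN ht ht2 (by omega) (by omega) hi ((eqS N).symm p)]
            have : L - (m + 1) + 1 = L - m := by omega
            rw [this]
          show G (fun p => max (P.TmidF (L - (m + 1))
              (fun p' => P.Vst (L - (m + 1)) i ((eqS N).symm p')) p) 0) = fun _ => P.Yn i
          have h2 : (fun p => max (P.TmidF (L - (m + 1))
              (fun p' => P.Vst (L - (m + 1)) i ((eqS N).symm p')) p) 0)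
              = fun p => P.Vst (L - m) i ((eqS N).symm p) := by
            funext p
            exact h1 p
          rw [h2]
          exact hGev i hi
  obtain ⟨G, hGnet, hGev⟩ := tails (L - 1) (by omega)
  refine ⟨fun x => G (fun p => max (P.T1F w c x p) 0), ?_, ?_⟩
  · have h := ReluNetExact.comp hcardS (P.isAffine_T1F w c) hGnet
    have he : L - 1 + 2 + 1 = L + 2 := by omega
    exact he ▸ h
  · intro i hi x hx
    have h1 : (fun p => max (P.T1F w c x p) 0)
        = fun p => P.Vst (L - (L - 1)) i ((eqS N).symm p) := by
      funext p
      have ha : P.T1F w c x p = P.T1 w c x ((eqS N).symm p) := rfl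
      have hb : L - (L - 1) = 1 := by omega
      rw [ha, hb]
      exact P.t1_eval ht2 hi hx ((eqS N).symm p)
    show G (fun p => max (P.T1F w c x p) 0) = fun _ => P.Yn i
    rw [h1]
    exact hGev i hi

end Assemble

end D

/-! ### Choosing an injective linear projection -/

theorem exists_inj_proj {d M : ℕ} (x : Fin M → Fin d → ℝ) (hx : Function.Injective x) :
    ∃ w : Fin d → ℝ, Function.Injective fun i => ∑ j, w j * x i j := by
  classical
  have main : ∀ s : Finset (Fin M × Fin M), (∀ p ∈ s, x p.1 ≠ x p.2) →
      ∃ w : Fin d → ℝ, ∀ p ∈ s, (∑ j, w j * (x p.1 j - x p.2 j)) ≠ 0 := by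
    intro s
    induction s using Finset.induction_on with
    | empty => exact fun _ => ⟨fun _ => 0, fun p hp => absurd hp (by simp)⟩
    | @insert p s hps ih =>
        intro hs
        obtain ⟨w, hw⟩ := ih fun q hq => hs q (Finset.mem_insert_of_mem hq)
        have hpne : x p.1 ≠ x p.2 := hs p (Finset.mem_insert_self p s)
        have hvv : 0 < ∑ j, (x p.1 j - x p.2 j) * (x p.1 j - x p.2 j) := by
          obtain ⟨j0, hj0⟩ := Function.ne_iff.1 hpne
          refine Finset.sum_pos' (fun j _ => mul_self_nonneg _)
            ⟨j0, Finset.mem_univ _, ?_⟩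
          exact mul_self_pos.2 (sub_ne_zero.2 hj0)
        obtain ⟨cc, hcc⟩ := Infinite.exists_notMem_finset
          ((insert p s).image fun q =>
            -(∑ j, w j * (x q.1 j - x q.2 j)) / (∑ j, (x p.1 j - x p.2 j) * (x q.1 j - x q.2 j)))
        refine ⟨fun j => w j + cc * (x p.1 j - x p.2 j), ?_⟩
        intro q hq
        have hexp : (∑ j, (w j + cc * (x p.1 j - x p.2 j)) * (x q.1 j - x q.2 j))
            = (∑ j, w j * (x q.1 j - x q.2 j)) +
              cc * ∑ j, (x p.1 j - x p.2 j) * (x q.1 j - x q.2 j) := by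
          rw [Finset.mul_sum, ← Finset.sum_add_distrib]
          exact Finset.sum_congr rfl fun j _ => by ring
        rw [hexp]
        by_cases hDq : (∑ j, (x p.1 j - x p.2 j) * (x q.1 j - x q.2 j)) = 0
        · rcases Finset.mem_insert.1 hq with rfl | hqs
          · exact absurd hDq (ne_of_gt hvv)
          · rw [hDq, mul_zero, add_zero]
            exact hw q hqs
        · intro hcon
          apply hcc
          rw [Finset.mem_image]
          refine ⟨q, hq, ?_⟩
          rw [div_eq_iff hDq]
          linarith
  have hs : ∀ p ∈ (Finset.univ.filter fun p : Fin M × Fin M => p.1 ≠ p.2),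
      x p.1 ≠ x p.2 := by
    intro p hp
    have hne := (Finset.mem_filter.1 hp).2
    exact fun hcon => hne (hx hcon)
  obtain ⟨w, hw⟩ := main _ hs
  refine ⟨w, fun a b hab => ?_⟩
  by_contra hne
  have hmem : (a, b) ∈ Finset.univ.filter (fun p : Fin M × Fin M => p.1 ≠ p.2) :=
    Finset.mem_filter.2 ⟨Finset.mem_univ _, hne⟩
  apply hw (a, b) hmem
  have hab' : (∑ j, w j * x a j) = ∑ j, w j * x b j := hab
  calc ∑ j, w j * (x (a, b).1 j - x (a, b).2 j)
      = (∑ j, w j * x a j) - ∑ j, w j * x b j := by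
        rw [← Finset.sum_sub_distrib]
        exact Finset.sum_congr rfl fun j _ => by ring
    _ = 0 := by linarith

end Stmt9Aux

/-- Lemma `interpolate real`. -/
theorem stmt9 (d N L : ℕ) (hd : 0 < d) (hN : 0 < N) (hL : 0 < L)
    (x : Fin (N ^ 2 * L) → (Fin d → ℝ)) (hx : Function.Injective x)
    (y : Fin (N ^ 2 * L) → ℝ) (hy : ∀ i, 0 ≤ y i) :
    ∃ φ : (Fin d → ℝ) → ℝ,
      IsReluNet1 d φ (4 * N + 4) (L + 2) ∧ ∀ i, φ (x i) = y i := by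
  classical
  obtain ⟨w, hw⟩ := Stmt9Aux.exists_inj_proj x hx
  have hM : 0 < N ^ 2 * L := by positivity
  let F : Fin (N ^ 2 * L) → ℝ := fun i => ∑ j, w j * x i j
  let π : Equiv.Perm (Fin (N ^ 2 * L)) := Tuple.sort F
  have hmono : Monotone (F ∘ π) := Tuple.monotone_sort F
  have hinj : Function.Injective (F ∘ π) := Function.Injective.comp hw π.injective
  have hsm : StrictMono (F ∘ π) := hmono.strictMono_of_injective hinj
  let c : ℝ := 2 - F (π ⟨0, hM⟩)
  let P : Stmt9Aux.D N L := ⟨fun i => F (π i) + c, fun i => y (π i)⟩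
  have ht : StrictMono P.t := by
    intro a b hab
    show F (π a) + c < F (π b) + c
    have h1 := hsm hab
    simp only [Function.comp_apply] at h1
    linarith
  have ht2 : ∀ i, (2 : ℝ) ≤ P.t i := by
    intro i
    show 2 ≤ F (π i) + c
    have h0 : F (π ⟨0, hM⟩) ≤ F (π i) := by
      have h1 := hmono (show (⟨0, hM⟩ : Fin (N ^ 2 * L)) ≤ i from Nat.zero_le _)
      simpa using h1
    show 2 ≤ F (π i) + (2 - F (π ⟨0, hM⟩))
    linarith
  obtain ⟨φ0, hnet, hev⟩ := P.main_net hN hL ht ht2 w c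
  refine ⟨fun x' => φ0 x' 0, ⟨L + 2, le_refl _, ?_⟩, ?_⟩
  · have heq : (fun (x' : Fin d → ℝ) (_ : Fin 1) => φ0 x' 0) = φ0 := by
      funext x' j
      have hj : j = 0 := Subsingleton.elim j 0
      rw [hj]
    show ReluNetExact d 1 (fun x' _ => φ0 x' 0) (4 * N + 4) (L + 2)
    rw [heq]
    exact hnet
  · intro i
    show φ0 (x i) 0 = y i
    have hi' : ((π.symm i : Fin (N ^ 2 * L)) : ℕ) < N ^ 2 * L := (π.symm i).2
    have hx' : (∑ j, w j * x i j) + c = P.Tn ((π.symm i : Fin (N ^ 2 * L)) : ℕ) := by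
      rw [Stmt9Aux.D.Tn, dif_pos hi']
      show (∑ j, w j * x i j) + c = P.t ⟨((π.symm i : Fin (N ^ 2 * L)) : ℕ), hi'⟩
      rw [Fin.eta]
      show (∑ j, w j * x i j) + c = F (π (π.symm i)) + c
      rw [Equiv.apply_symm_apply]
    have hres := hev ((π.symm i : Fin (N ^ 2 * L)) : ℕ) hi' (x i) hx'
    have h2 : φ0 (x i) 0 = P.Yn ((π.symm i : Fin (N ^ 2 * L)) : ℕ) := by rw [hres]
    rw [h2, Stmt9Aux.D.Yn, dif_pos hi']
    show y (π ⟨((π.symm i : Fin (N ^ 2 * L)) : ℕ), hi'⟩) = y i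
    rw [Fin.eta, Equiv.apply_symm_apply]

end
end

section
/- There exists a ReLU network φ: ℝ³ → ℝ with width 14 and depth 3 such that φ(x_1, x_2, x_3) = mid(x_1, x_2, x_3) for all x_1, x_2, x_3 ∈ ℝ. -/
open scoped BigOperators ENNReal

noncomputable section

/-- The middle (median) of three real numbers. -/
def mid (a b c : ℝ) : ℝ := a + b + c - max a (max b c) - min a (min b c)


/-
The median `mid a b c` is `a` clamped to `[lo, hi] = [min b c, max b c]`, and for `lo ≤ hi` this
clamp equals `lo + relu (a - lo) - relu (a - hi)`. Since `t = relu t - relu (-t)`,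
`lo = b - relu (b - c)` and `hi = b + relu (c - b)`, a first hidden layer of six neurons makes
`a`, `lo`, `hi` affine in its output, and a second hidden layer of four neurons produces
`relu (a - lo)`, `relu (a - hi)` and `lo = relu lo - relu (-lo)`; the output layer is then
linear. The network has width 6 ≤ 14.
-/

lemma mid_eq_max_min_min_max (a b c : ℝ) : mid a b c = max (min b c) (min a (max b c)) := by
  simp only [mid, max_def, min_def]
  split_ifs <;> linarith

lemma max_min_eq_add_max_sub_zero_sub_max_sub_zero {lo hi : ℝ} (h : lo ≤ hi) (a : ℝ) :
    max lo (min a hi) = lo + max (a - lo) 0 - max (a - hi) 0 := by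
  simp only [max_def, min_def]
  split_ifs <;> linarith

lemma sub_max_sub_zero (b c : ℝ) : b - max (b - c) 0 = min b c := by
  rcases le_total b c with h | h <;> simp [h, sub_nonneg.2, sub_nonpos.2]

lemma add_max_sub_zero (b c : ℝ) : b + max (c - b) 0 = max b c := by
  rcases le_total b c with h | h <;> simp [h, sub_nonneg.2, sub_nonpos.2]

lemma max_zero_sub_max_neg_zero (t : ℝ) : max t 0 - max (-t) 0 = t :=
  posPart_sub_negPart t

lemma ReluNetExact.mono_width {din dout N N' L : ℕ} {f : (Fin din → ℝ) → (Fin dout → ℝ)}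
    (h : ReluNetExact din dout f N L) (hN : N ≤ N') : ReluNetExact din dout f N' L := by
  induction h with
  | affine hf => exact .affine hf
  | comp hk hT _ ih => exact .comp (hk.trans hN) hT (ih hN)

lemma IsReluNet1.of_reluNetExact {din N L : ℕ} {f : (Fin din → ℝ) → (Fin 1 → ℝ)}
    (h : ReluNetExact din 1 f N L) : IsReluNet1 din (fun x => f x 0) N L := by
  refine ⟨L, le_rfl, ?_⟩
  convert h using 1
  funext x i
  rw [Fin.fin_one_eq_zero i]

def midLayer1 (x : Fin 3 → ℝ) : Fin 6 → ℝ :=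
  ![x 0, -x 0, x 1, -x 1, x 1 - x 2, x 2 - x 1]

-- With `y` the output of the first hidden layer, `y 0 - y 1 = a` and `y 2 - y 3 - y 4 = min b c`,
-- `y 2 - y 3 + y 5 = max b c`; this layer computes `(a - min b c, a - max b c, min b c, -min b c)`.
def midLayer2 (y : Fin 6 → ℝ) : Fin 4 → ℝ :=
  ![y 0 - y 1 - y 2 + y 3 + y 4, y 0 - y 1 - y 2 + y 3 - y 5, y 2 - y 3 - y 4, -y 2 + y 3 + y 4]

def midLayer3 (z : Fin 4 → ℝ) : Fin 1 → ℝ :=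
  ![z 2 - z 3 + z 0 - z 1]

lemma isAffineMap_midLayer1 : IsAffineMap 3 6 midLayer1 :=
  ⟨!![1, 0, 0; -1, 0, 0; 0, 1, 0; 0, -1, 0; 0, 1, -1; 0, -1, 1], 0, fun x i => by
    fin_cases i <;> simp [midLayer1, Fin.sum_univ_succ] <;> ring⟩

lemma isAffineMap_midLayer2 : IsAffineMap 6 4 midLayer2 :=
  ⟨!![1, -1, -1, 1, 1, 0; 1, -1, -1, 1, 0, -1; 0, 0, 1, -1, -1, 0; 0, 0, -1, 1, 1, 0], 0,
    fun x i => by fin_cases i <;> simp [midLayer2, Fin.sum_univ_succ] <;> ring⟩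

lemma isAffineMap_midLayer3 : IsAffineMap 4 1 midLayer3 :=
  ⟨!![1, -1, 1, -1], 0, fun x i => by
    fin_cases i; simp [midLayer3, Fin.sum_univ_succ]; ring⟩

def midNet (x : Fin 3 → ℝ) : Fin 1 → ℝ :=
  midLayer3 fun k => max (midLayer2 (fun j => max (midLayer1 x j) 0) k) 0

lemma reluNetExact_midNet : ReluNetExact 3 1 midNet 6 3 :=
  .comp le_rfl isAffineMap_midLayer1 <|
    .comp (by norm_num) isAffineMap_midLayer2 (.affine isAffineMap_midLayer3)

lemma midLayer2_relu_midLayer1 (a b c : ℝ) :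
    midLayer2 (fun j => max (midLayer1 ![a, b, c] j) 0) =
      ![a - min b c, a - max b c, min b c, -min b c] := by
  have ha := max_zero_sub_max_neg_zero a
  have hb := max_zero_sub_max_neg_zero b
  have hlo := sub_max_sub_zero b c
  have hhi := add_max_sub_zero b c
  funext i
  fin_cases i <;> simp [midLayer1, midLayer2] <;> linarith

lemma midNet_apply (a b c : ℝ) : midNet ![a, b, c] 0 = mid a b c := by
  rw [mid_eq_max_min_min_max, max_min_eq_add_max_sub_zero_sub_max_sub_zero min_le_max, midNet,
    midLayer2_relu_midLayer1]
  simp [midLayer3]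

/-- Lemma `mid net`. -/
theorem stmt12 :
    ∃ φ : (Fin 3 → ℝ) → ℝ,
      IsReluNet1 3 φ 14 3 ∧ ∀ x₁ x₂ x₃ : ℝ, φ ![x₁, x₂, x₃] = mid x₁ x₂ x₃ :=
  ⟨fun x => midNet x 0, .of_reluNetExact (reluNetExact_midNet.mono_width (by norm_num)),
    midNet_apply⟩
end
end
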